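/- arXiv:2312.02080 — 12 statements merged into one kernel-verified Lean document; each statement's English description precedes it below -/
import Mathlib

section
/- Every positive concave function f : ℝ₊^K → ℝ₊₊ is a standard interference function; i.e., it is monotone (p ≥ q implies f(p) ≥ f(q)) and satisfies α·f(p) > f(α·p) for every p ∈ ℝ₊^K and every α > 1. -/
/-- `f` is a standard interference function on `ℝ₊^K`. -/
def IsStdIF {K : ℕ} (f : (Fin K → ℝ) → ℝ) : Prop :=
  (∀ p : Fin K → ℝ, (∀ i, 0 ≤ p i) → 0 < f p) ∧
  (∀ p q : Fin K → ℝ, (∀ i, 0 ≤ q i) → (∀ i, q i ≤ p i) → f q ≤ f p) ∧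
  (∀ p : Fin K → ℝ, (∀ i, 0 ≤ p i) → ∀ α : ℝ, 1 < α → f (α • p) < α * f p)

/-!
Concavity gives `f (a • x + b • y) ≥ a * f x + b * f y > b * f y` whenever `a > 0` and `f x > 0`.
Writing `p` as such a combination of `α • p` and `0` yields `f (α • p) < α * f p`. If `q ≤ p` but
`f p < f q`, writing `p` as a combination of `q` and a point far out on the ray from `q` through `p`
with `b = f p / f q` yields `f p < f p`.
-/

open Set

section Concave

variable {E : Type*} [AddCommGroup E] [Module ℝ E] {s : Set E} {f : E → ℝ}

lemma ConcaveOn.mul_lt_apply_add (hf : ConcaveOn ℝ s f) {x y : E} (hx : x ∈ s) (hy : y ∈ s)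
    (hfx : 0 < f x) {a b : ℝ} (ha : 0 < a) (hb : 0 ≤ b) (hab : a + b = 1) :
    b * f y < f (a • x + b • y) :=
  calc b * f y < a * f x + b * f y := by linarith [mul_pos ha hfx]
    _ ≤ f (a • x + b • y) := hf.2 hx hy ha.le hb hab

lemma ConcaveOn.apply_smul_lt (hf : ConcaveOn ℝ s f) (h0 : (0 : E) ∈ s) (hf0 : 0 < f 0)
    {x : E} {α : ℝ} (hαx : α • x ∈ s) (hα : 1 < α) :
    f (α • x) < α * f x := by
  have hα0 : 0 < α := one_pos.trans hα
  have hcomb : (1 - α⁻¹) • (0 : E) + α⁻¹ • α • x = x := by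
    rw [smul_zero, zero_add, inv_smul_smul₀ hα0.ne']
  have key := hf.mul_lt_apply_add h0 hαx hf0 (sub_pos.2 (inv_lt_one_of_one_lt₀ hα))
    (inv_nonneg.2 hα0.le) (sub_add_cancel 1 α⁻¹)
  rw [hcomb] at key
  calc f (α • x) = α * (α⁻¹ * f (α • x)) := by field_simp
    _ < α * f x := mul_lt_mul_of_pos_left key hα0

lemma ConcaveOn.apply_le_apply_of_ray_mem (hf : ConcaveOn ℝ s f) (hfpos : ∀ x ∈ s, 0 < f x)
    {p q : E} (hq : q ∈ s) (hray : ∀ r : ℝ, 1 ≤ r → q + r • (p - q) ∈ s) :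
    f q ≤ f p := by
  by_contra! hlt
  have hp : p ∈ s := by simpa using hray 1 le_rfl
  have hfq := hfpos q hq
  have hfp := hfpos p hp
  set b := f p / f q
  have hb1 : b < 1 := (div_lt_one hfq).2 hlt
  have ha : 0 < 1 - b := sub_pos.2 hb1
  set r := (1 - b)⁻¹
  have hr : 1 ≤ r := one_le_inv₀ ha |>.2 (by linarith [div_pos hfp hfq])
  have hcomb : (1 - b) • (q + r • (p - q)) + b • q = p := by
    rw [smul_add, smul_smul, mul_inv_cancel₀ ha.ne', one_smul]
    module
  have key := hf.mul_lt_apply_add (hray r hr) hq (hfpos _ (hray r hr)) ha (div_pos hfp hfq).le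
    (sub_add_cancel 1 b)
  rw [hcomb, div_mul_cancel₀ _ hfq.ne'] at key
  exact lt_irrefl _ key

end Concave

theorem stmt0 {K : ℕ} (f : (Fin K → ℝ) → ℝ)
    (hpos : ∀ p : Fin K → ℝ, (∀ i, 0 ≤ p i) → 0 < f p)
    (hconc : ∀ x y : Fin K → ℝ, (∀ i, 0 ≤ x i) → (∀ i, 0 ≤ y i) →
      ∀ t : ℝ, 0 ≤ t → t ≤ 1 →
        t * f x + (1 - t) * f y ≤ f (t • x + (1 - t) • y)) :
    IsStdIF f := by
  have hconcave : ConcaveOn ℝ (Ici 0) f := by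
    refine ⟨convex_Ici 0, fun x hx y hy a b ha hb hab => ?_⟩
    obtain rfl : b = 1 - a := by linarith
    exact hconc x y hx hy a ha (by linarith)
  refine ⟨hpos, fun p q hq hqp => ?_, fun p hp α hα => ?_⟩
  · refine hconcave.apply_le_apply_of_ray_mem hpos hq fun r hr => ?_
    have : 0 ≤ r • (p - q) := smul_nonneg (by linarith) (sub_nonneg.2 hqp)
    exact (Pi.le_def.2 hq).trans (le_add_of_nonneg_right this)
  · exact hconcave.apply_smul_lt self_mem_Ici (hpos 0 fun _ => le_rfl)
      (smul_nonneg (by linarith) (Pi.le_def.2 hp)) hα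
end

section
/- If f : ℝ₊^K → ℝ₊₊ is a standard interference function and T : ℝ₊^K → ℝ₊₊^K is a standard interference mapping (each coordinate is a standard interference function), then the composition p ↦ f(T(p)) is a standard interference function. -/
namespace IsStdIF

variable {K : ℕ} {T : (Fin K → ℝ) → (Fin K → ℝ)} {p : Fin K → ℝ}

theorem map_nonneg (hT : ∀ k, IsStdIF fun p => T p k) (hp : ∀ i, 0 ≤ p i) (k : Fin K) :
    0 ≤ T p k :=
  ((hT k).1 p hp).le

theorem map_smul_le_smul_map (hT : ∀ k, IsStdIF fun p => T p k) (hp : ∀ i, 0 ≤ p i)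
    {α : ℝ} (hα : 1 < α) (k : Fin K) : T (α • p) k ≤ (α • T p) k :=
  ((hT k).2.2 p hp α hα).le

end IsStdIF

theorem stmt2 {K : ℕ} (f : (Fin K → ℝ) → ℝ) (T : (Fin K → ℝ) → (Fin K → ℝ))
    (hf : IsStdIF f) (hT : ∀ k : Fin K, IsStdIF (fun p => T p k)) :
    IsStdIF (fun p => f (T p)) := by
  obtain ⟨hf_pos, hf_mono, hf_scale⟩ := hf
  refine ⟨fun p hp => hf_pos (T p) (IsStdIF.map_nonneg hT hp), ?_, ?_⟩
  · intro p q hq hqp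
    exact hf_mono (T p) (T q) (IsStdIF.map_nonneg hT hq) fun k => (hT k).2.1 p q hq hqp
  · intro p hp α hα
    have hαp : ∀ i, 0 ≤ (α • p) i := fun i => mul_nonneg (by linarith) (hp i)
    calc f (T (α • p))
        ≤ f (α • T p) :=
          hf_mono _ _ (IsStdIF.map_nonneg hT hαp) (IsStdIF.map_smul_le_smul_map hT hp hα)
      _ < α * f (T p) := hf_scale (T p) (IsStdIF.map_nonneg hT hp) α hα
end

section
/- The pointwise minimum of two standard interference functions is a standard interference function. -/
theorem stmt4 {K : ℕ} (f g : (Fin K → ℝ) → ℝ)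
    (hf : IsStdIF f) (hg : IsStdIF g) :
    IsStdIF (fun p => min (f p) (g p)) := by
  obtain ⟨hf_pos, hf_mono, hf_scal⟩ := hf
  obtain ⟨hg_pos, hg_mono, hg_scal⟩ := hg
  refine ⟨fun p hp => lt_min (hf_pos p hp) (hg_pos p hp),
    fun p q hq hqp => min_le_min (hf_mono p q hq hqp) (hg_mono p q hq hqp),
    fun p hp α hα => ?_⟩
  rw [mul_min_of_nonneg _ _ (zero_le_one.trans hα.le)]
  exact min_lt_min (hf_scal p hp α hα) (hg_scal p hp α hα)
end

section
/- The pointwise maximum (over n) of a finite family of standard interference functions f₁, …, fₙ is a standard interference function; however, the pointwise infimum of an infinite family of standard interference functions need not be a standard interference function: for K = 1, each constant function f_u(x) = u with u > 0 is a standard interference function, yet x ↦ inf_{u > 0} f_u(x) = 0 is not. -/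
theorem IsStdIF.finset_sup' {K : ℕ} {ι : Type*} {s : Finset ι} (hs : s.Nonempty)
    {f : ι → (Fin K → ℝ) → ℝ} (hf : ∀ i ∈ s, IsStdIF (f i)) :
    IsStdIF (fun p => s.sup' hs fun i => f i p) := by
  refine ⟨fun p hp => ?_, fun p q hq hqp => ?_, fun p hp α hα => ?_⟩
  · obtain ⟨i, hi⟩ := hs
    exact ((hf i hi).1 p hp).trans_le (s.le_sup' (fun j => f j p) hi)
  · exact Finset.sup'_le _ _ fun i hi =>
      ((hf i hi).2.1 p q hq hqp).trans (s.le_sup' (fun j => f j p) hi)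
  · refine (Finset.sup'_lt_iff _).2 fun i hi => ?_
    calc f i (α • p) < α * f i p := (hf i hi).2.2 p hp α hα
      _ ≤ α * s.sup' hs fun j => f j p :=
        mul_le_mul_of_nonneg_left (s.le_sup' (fun j => f j p) hi) (by linarith)

theorem isStdIF_const_iff {K : ℕ} {c : ℝ} : IsStdIF (fun _ : Fin K → ℝ => c) ↔ 0 < c := by
  refine ⟨fun h => h.1 0 fun _ => le_rfl, fun hc => ?_⟩
  exact ⟨fun _ _ => hc, fun _ _ _ _ => le_rfl, fun _ _ α hα => by nlinarith⟩

theorem iInf_pos_real_eq_zero : ⨅ u : {u : ℝ // 0 < u}, (u : ℝ) = 0 := by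
  rw [iInf, Subtype.range_coe_subtype]
  exact csInf_Ioi

theorem stmt5 {K n : ℕ} (hn : 0 < n) (f : Fin n → (Fin K → ℝ) → ℝ)
    (hf : ∀ i, IsStdIF (f i)) :
    IsStdIF (fun p => (Finset.univ.sup' (Finset.univ_nonempty_iff.mpr
        (Fin.pos_iff_nonempty.mp hn)) fun i => f i p)) ∧
    (∀ u : ℝ, 0 < u → IsStdIF (fun _ : Fin 1 → ℝ => u)) ∧
    ¬ IsStdIF (fun x : Fin 1 → ℝ => ⨅ u : {u : ℝ // 0 < u}, (u : ℝ)) := by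
  refine ⟨IsStdIF.finset_sup' _ fun i _ => hf i, fun u hu => isStdIF_const_iff.2 hu, ?_⟩
  rw [isStdIF_const_iff, iInf_pos_real_eq_zero]
  exact lt_irrefl 0
end

section
/- A standard interference mapping T : ℝ₊^K → ℝ₊₊^K has at most one fixed point; i.e., if T(p) = p and T(q) = q for p, q ∈ ℝ₊^K, then p = q. -/
/-!
If `p` and `q` are fixed points, then `p = T p` is strictly positive, so the least `α` with
`q ≤ α • p` is `α = max_j q j / p j`. If `α > 1`, then at a coordinate `j` attaining the maximum,
monotonicity and scalability give `q j = T q j ≤ T (α • p) j < α * T p j = α * p j = q j`.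
Hence `q ≤ p`, and `p = q` by symmetry.
-/

namespace IsStdIF

variable {K : ℕ} {f : (Fin K → ℝ) → ℝ}

theorem apply_lt_mul_of_le_smul (hf : IsStdIF f) {p q : Fin K → ℝ} (hp : ∀ i, 0 ≤ p i)
    (hq : ∀ i, 0 ≤ q i) {α : ℝ} (hα : 1 < α) (hqp : ∀ i, q i ≤ α * p i) :
    f q < α * f p :=
  calc f q ≤ f (α • p) := hf.2.1 (α • p) q hq hqp
    _ < α * f p := hf.2.2 p hp α hα

end IsStdIF

section FixedPoint

variable {K : ℕ} {T : (Fin K → ℝ) → (Fin K → ℝ)}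

theorem pos_of_stdIF_fixedPoint (hT : ∀ k, IsStdIF (fun p => T p k)) {p : Fin K → ℝ}
    (hp : ∀ i, 0 ≤ p i) (hfp : T p = p) (i : Fin K) : 0 < p i :=
  hfp ▸ (hT i).1 p hp

theorem le_of_stdIF_fixedPoints (hT : ∀ k, IsStdIF (fun p => T p k)) {p q : Fin K → ℝ}
    (hp : ∀ i, 0 ≤ p i) (hq : ∀ i, 0 ≤ q i) (hfp : T p = p) (hfq : T q = q) : q ≤ p := by
  have hp_pos := pos_of_stdIF_fixedPoint hT hp hfp
  by_contra hqp
  obtain ⟨i, hi⟩ : ∃ i, p i < q i := by simpa [Pi.le_def] using hqp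
  have : Nonempty (Fin K) := ⟨i⟩
  obtain ⟨j, hj⟩ := Finite.exists_max fun k => q k / p k
  set α := q j / p j
  have hα : 1 < α := ((one_lt_div (hp_pos i)).2 hi).trans_le (hj i)
  have hqα : ∀ k, q k ≤ α * p k := fun k => (div_le_iff₀ (hp_pos k)).1 (hj k)
  have hqj : q j = α * p j := (div_mul_cancel₀ _ (hp_pos j).ne').symm
  have hlt := (hT j).apply_lt_mul_of_le_smul hp hq hα hqα
  simp only [hfp, hfq] at hlt
  exact hlt.ne hqj

end FixedPoint

theorem stmt6 {K : ℕ} (T : (Fin K → ℝ) → (Fin K → ℝ))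
    (hT : ∀ k : Fin K, IsStdIF (fun p => T p k))
    (p q : Fin K → ℝ) (hp : ∀ i, 0 ≤ p i) (hq : ∀ i, 0 ≤ q i)
    (hfp : T p = p) (hfq : T q = q) : p = q :=
  le_antisymm (le_of_stdIF_fixedPoints hT hq hp hfq hfp)
    (le_of_stdIF_fixedPoints hT hp hq hfp hfq)
end

section
/- Let T : ℝ₊^K → ℝ₊₊^K be a standard interference mapping with a fixed point p* ∈ ℝ₊₊^K. Then for every starting point p₁ ∈ ℝ₊^K, the sequence defined by p_{n+1} = T(p_n) converges to p*. -/
open Filter Topology Function Set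

theorem eventually_forall_lt_mul_nhds_one {ι : Type*} [Finite ι] {x y : ι → ℝ}
    (h : ∀ i, x i < y i) : ∀ᶠ r in 𝓝 (1 : ℝ), ∀ i, x i < r * y i :=
  eventually_all.2 fun i =>
    ((continuous_mul_const (y i)).tendsto' 1 (y i) (one_mul _)).eventually_const_lt (h i)

theorem exists_lt_one_forall_lt_mul {ι : Type*} [Finite ι] {x y : ι → ℝ}
    (h : ∀ i, x i < y i) : ∃ r ∈ Ioo (0 : ℝ) 1, ∀ i, x i < r * y i :=
  (Eventually.and (Ioo_mem_nhdsLT zero_lt_one)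
    ((eventually_forall_lt_mul_nhds_one h).filter_mono nhdsWithin_le_nhds)).exists

theorem eventually_le_smul_atTop {ι : Type*} [Finite ι] (x : ι → ℝ) {y : ι → ℝ}
    (hy : ∀ i, 0 < y i) : ∀ᶠ α : ℝ in atTop, x ≤ α • y :=
  eventually_all.2 fun i => (tendsto_id.atTop_mul_const (hy i)).eventually_ge_atTop (x i)

theorem exists_pos_smul_le {ι : Type*} [Finite ι] {x y : ι → ℝ} (hx : ∀ i, 0 < x i) :
    ∃ a : ℝ, 0 < a ∧ a • y ≤ x := by
  have hsmall : ∀ᶠ a in 𝓝 (0 : ℝ), ∀ i, a * y i < x i := eventually_all.2 fun i =>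
    ((continuous_mul_const (y i)).tendsto' 0 0 (zero_mul _)).eventually_lt_const (hx i)
  obtain ⟨a, ha, hax⟩ :=
    ((eventually_mem_nhdsWithin (s := Ioi 0)).and (hsmall.filter_mono nhdsWithin_le_nhds)).exists
  exact ⟨a, ha, fun i => (hax i).le⟩

theorem tendsto_of_eventually_smul_bounds {α ι : Type*} {l : Filter α} {u : α → ι → ℝ}
    {y : ι → ℝ} (hup : ∀ β : ℝ, 1 < β → ∀ᶠ n in l, u n ≤ β • y)
    (hlo : ∀ μ ∈ Ioo (0 : ℝ) 1, ∀ᶠ n in l, μ • y ≤ u n) : Tendsto u l (𝓝 y) := by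
  refine tendsto_pi_nhds.2 fun k => tendsto_order.2 ⟨fun a ha => ?_, fun a ha => ?_⟩
  · have hnear : ∀ᶠ μ in 𝓝 (1 : ℝ), a < μ * y k :=
      ((continuous_mul_const (y k)).tendsto' 1 (y k) (one_mul _)).eventually_const_lt ha
    obtain ⟨μ, hμ, haμ⟩ :=
      (Eventually.and (Ioo_mem_nhdsLT zero_lt_one) (hnear.filter_mono nhdsWithin_le_nhds)).exists
    exact (hlo μ hμ).mono fun n hn => haμ.trans_le (hn k)
  · have hnear : ∀ᶠ β in 𝓝 (1 : ℝ), β * y k < a :=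
      ((continuous_mul_const (y k)).tendsto' 1 (y k) (one_mul _)).eventually_lt_const ha
    obtain ⟨β, hβ, hβa⟩ :=
      ((eventually_mem_nhdsWithin (s := Ioi 1)).and (hnear.filter_mono nhdsWithin_le_nhds)).exists
    exact (hup β hβ).mono fun n hn => (hn k).trans_lt hβa

def IsStdInterference {K : ℕ} (T : (Fin K → ℝ) → Fin K → ℝ) : Prop :=
  ∀ k, IsStdIF fun p => T p k

namespace IsStdInterference

variable {K : ℕ} {T : (Fin K → ℝ) → Fin K → ℝ} (hT : IsStdInterference T) {p q : Fin K → ℝ}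
include hT

theorem apply_pos (hp : 0 ≤ p) (k : Fin K) : 0 < T p k := (hT k).1 p hp

theorem mono (hq : 0 ≤ q) (hqp : q ≤ p) : T q ≤ T p := fun k => (hT k).2.1 p q hq hqp

theorem apply_smul_lt (hp : 0 ≤ p) {α : ℝ} (hα : 1 < α) (k : Fin K) :
    T (α • p) k < α * T p k :=
  (hT k).2.2 p hp α hα

theorem apply_smul_le (hp : 0 ≤ p) {α : ℝ} (hα : 1 ≤ α) : T (α • p) ≤ α • T p := by
  rcases hα.eq_or_lt with rfl | hα
  · simp
  · exact fun k => (hT.apply_smul_lt hp hα k).le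

theorem mul_apply_lt_apply_smul (hp : 0 ≤ p) {μ : ℝ} (hμ : μ ∈ Ioo (0 : ℝ) 1) (k : Fin K) :
    μ * T p k < T (μ • p) k := by
  have h := hT.apply_smul_lt (smul_nonneg hμ.1.le hp) ((one_lt_inv₀ hμ.1).2 hμ.2) k
  rw [inv_smul_smul₀ hμ.1.ne'] at h
  calc μ * T p k < μ * (μ⁻¹ * T (μ • p) k) := mul_lt_mul_of_pos_left h hμ.1
    _ = T (μ • p) k := mul_inv_cancel_left₀ hμ.1.ne' _

theorem smul_le_apply_smul (hp : 0 ≤ p) {μ : ℝ} (hμ0 : 0 < μ) (hμ1 : μ ≤ 1) :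
    μ • T p ≤ T (μ • p) := by
  rcases hμ1.eq_or_lt with rfl | hμ1
  · simp
  · exact fun k => (hT.mul_apply_lt_apply_smul hp ⟨hμ0, hμ1⟩ k).le

theorem iterate_nonneg (hp : 0 ≤ p) (n : ℕ) : 0 ≤ T^[n] p := by
  induction n with
  | zero => exact hp
  | succ n ih =>
    rw [iterate_succ_apply']
    exact fun k => (hT.apply_pos ih k).le

variable {pstar : Fin K → ℝ} (hpos : ∀ i, 0 < pstar i) (hfix : T pstar = pstar)
include hpos hfix

theorem exists_contraction_above {β : ℝ} (hβ : 1 < β) :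
    ∃ r ∈ Ioo (0 : ℝ) 1, ∀ b ≥ β, ∀ x, 0 ≤ x → x ≤ b • pstar → T x ≤ (r * b) • pstar := by
  have hp : 0 ≤ pstar := fun i => (hpos i).le
  have hβ0 : 0 < β := by linarith
  obtain ⟨r, hr, hTr⟩ := exists_lt_one_forall_lt_mul (x := T (β • pstar)) (y := β • pstar)
    fun k => by simpa [hfix] using hT.apply_smul_lt hp hβ k
  refine ⟨r, hr, fun b hb x hx hxb => ?_⟩
  calc T x ≤ T (b • pstar) := hT.mono hx hxb
    _ = T ((b / β) • β • pstar) := by rw [smul_smul, div_mul_cancel₀ _ hβ0.ne']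
    _ ≤ (b / β) • T (β • pstar) :=
      hT.apply_smul_le (smul_nonneg hβ0.le hp) ((one_le_div hβ0).2 hb)
    _ ≤ (b / β) • r • β • pstar :=
      smul_le_smul_of_nonneg_left (fun k => (hTr k).le) (div_pos (by linarith) hβ0).le
    _ = (r * b) • pstar := by
      rw [smul_smul, smul_smul]
      congr 1
      field_simp

theorem exists_expansion_below {μ : ℝ} (hμ : μ ∈ Ioo (0 : ℝ) 1) :
    ∃ r > 1, ∀ b ∈ Ioc 0 μ, ∀ x, b • pstar ≤ x → (r * b) • pstar ≤ T x := by
  have hp : 0 ≤ pstar := fun i => (hpos i).le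
  obtain ⟨s, hs, hTs⟩ := exists_lt_one_forall_lt_mul (x := μ • pstar) (y := T (μ • pstar))
    fun k => by simpa [hfix] using hT.mul_apply_lt_apply_smul hp hμ k
  refine ⟨s⁻¹, (one_lt_inv₀ hs.1).2 hs.2, fun b hb x hbx => ?_⟩
  calc (s⁻¹ * b) • pstar = (b / μ) • s⁻¹ • μ • pstar := by
        simp only [smul_smul]
        congr 1
        field_simp [hμ.1.ne']
    _ ≤ (b / μ) • T (μ • pstar) := smul_le_smul_of_nonneg_left
        (fun k => (inv_mul_le_iff₀ hs.1).2 (hTs k).le) (div_pos hb.1 hμ.1).le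
    _ ≤ T ((b / μ) • μ • pstar) := hT.smul_le_apply_smul (smul_nonneg hμ.1.le hp)
        (div_pos hb.1 hμ.1) ((div_le_one hμ.1).2 hb.2)
    _ = T (b • pstar) := by rw [smul_smul, div_mul_cancel₀ _ hμ.1.ne']
    _ ≤ T x := hT.mono (smul_nonneg hb.1.le hp) hbx

theorem eventually_iterate_le_smul {β : ℝ} (hβ : 1 < β) {x : Fin K → ℝ} (hx : 0 ≤ x) :
    ∀ᶠ n in atTop, T^[n] x ≤ β • pstar := by
  have hp : 0 ≤ pstar := fun i => (hpos i).le
  obtain ⟨r, hr, hcontr⟩ := hT.exists_contraction_above hpos hfix hβ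
  obtain ⟨α, hxα⟩ := (eventually_le_smul_atTop x hpos).exists
  have hbound : ∀ n, T^[n] x ≤ max β (r ^ n * α) • pstar := by
    intro n
    induction n with
    | zero => simpa using hxα.trans (smul_le_smul_of_nonneg_right (le_max_right β α) hp)
    | succ n ih =>
      rw [iterate_succ_apply']
      refine (hcontr _ (le_max_left _ _) _ (hT.iterate_nonneg hx n) ih).trans
        (smul_le_smul_of_nonneg_right ?_ hp)
      rw [mul_max_of_nonneg _ _ hr.1.le, pow_succ, mul_comm (r ^ n) r, mul_assoc]
      exact max_le_max (by nlinarith [hr.2]) le_rfl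
  have hsmall : ∀ᶠ n in atTop, r ^ n * α ≤ β := by
    refine ((tendsto_pow_atTop_nhds_zero_of_lt_one hr.1.le hr.2).mul_const α).eventually_le_const ?_
    linarith
  exact hsmall.mono fun n hn => (hbound n).trans_eq (by rw [max_eq_left hn])

theorem eventually_smul_le_iterate {μ : ℝ} (hμ : μ ∈ Ioo (0 : ℝ) 1) {x : Fin K → ℝ}
    (hx : ∀ i, 0 < x i) : ∀ᶠ n in atTop, μ • pstar ≤ T^[n] x := by
  have hp : 0 ≤ pstar := fun i => (hpos i).le
  obtain ⟨r, hr, hexp⟩ := hT.exists_expansion_below hpos hfix hμ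
  obtain ⟨a, ha, hax⟩ := exists_pos_smul_le (y := pstar) hx
  have hbound : ∀ n, min μ (r ^ n * a) • pstar ≤ T^[n] x := by
    intro n
    induction n with
    | zero => simpa using (smul_le_smul_of_nonneg_right (min_le_right μ a) hp).trans hax
    | succ n ih =>
      rw [iterate_succ_apply']
      refine (smul_le_smul_of_nonneg_right ?_ hp).trans
        (hexp _ ⟨lt_min hμ.1 (by positivity), min_le_left _ _⟩ _ ih)
      rw [mul_min_of_nonneg _ _ (by linarith), pow_succ, mul_comm (r ^ n) r, mul_assoc]
      exact min_le_min (by nlinarith [hμ.1]) le_rfl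
  have hlarge : ∀ᶠ n in atTop, μ ≤ r ^ n * a :=
    ((tendsto_pow_atTop_atTop_of_one_lt hr).atTop_mul_const ha).eventually_ge_atTop μ
  exact hlarge.mono fun n hn => (hbound n).trans_eq' (by rw [min_eq_left hn])

theorem tendsto_iterate_of_pos {x : Fin K → ℝ} (hx : ∀ i, 0 < x i) :
    Tendsto (fun n => T^[n] x) atTop (𝓝 pstar) :=
  tendsto_of_eventually_smul_bounds
    (fun _ hβ => hT.eventually_iterate_le_smul hpos hfix hβ fun i => (hx i).le)
    (fun _ hμ => hT.eventually_smul_le_iterate hpos hfix hμ hx)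

end IsStdInterference

theorem stmt7 {K : ℕ} (T : (Fin K → ℝ) → (Fin K → ℝ))
    (hT : ∀ k : Fin K, IsStdIF (fun p => T p k))
    (pstar : Fin K → ℝ) (hpos : ∀ i, 0 < pstar i) (hfix : T pstar = pstar)
    (p₁ : Fin K → ℝ) (hp₁ : ∀ i, 0 ≤ p₁ i) :
    Filter.Tendsto (fun n => T^[n] p₁) Filter.atTop (nhds pstar) := by
  have hT : IsStdInterference T := hT
  have hshift := hT.tendsto_iterate_of_pos hpos hfix (hT.apply_pos hp₁)
  simp only [← iterate_succ_apply] at hshift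
  exact (tendsto_add_atTop_iff_nat 1).1 hshift
end

section
/- Any standard interference mapping T : ℝ₊^K → ℝ₊₊^K is nonexpansive with respect to the Thompson metric on the positive cone: for all p, q ∈ ℝ₊₊^K, d_T(T(p), T(q)) ≤ d_T(p, q), where d_T(x, y) = log max_k max{x_k/y_k, y_k/x_k}. -/
/-- Thompson metric on the strictly positive cone of ℝ^K (K > 0). -/
noncomputable def thompsonDist {K : ℕ} (hK : 0 < K) (x y : Fin K → ℝ) : ℝ :=
  Real.log (Finset.univ.sup' (Finset.univ_nonempty_iff.mpr
    (Fin.pos_iff_nonempty.mp hK)) fun k => max (x k / y k) (y k / x k))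

theorem IsStdIF.le_mul_of_le_mul {K : ℕ} {f : (Fin K → ℝ) → ℝ} (hf : IsStdIF f)
    {α : ℝ} (hα : 1 ≤ α) {p q : Fin K → ℝ} (hp : ∀ i, 0 ≤ p i) (hq : ∀ i, 0 ≤ q i)
    (hqp : ∀ i, q i ≤ α * p i) : f q ≤ α * f p := by
  obtain ⟨-, hmono, hscale⟩ := hf
  rcases hα.eq_or_lt with rfl | hα
  · simp only [one_mul] at hqp ⊢
    exact hmono p q hq hqp
  · calc f q ≤ f (α • p) := hmono _ _ hq (by simpa using hqp)
      _ ≤ α * f p := (hscale p hp α hα).le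

namespace Thompson

variable {K : ℕ} (hK : 0 < K)

noncomputable def ratio (x y : Fin K → ℝ) : ℝ :=
  Finset.univ.sup' (Finset.univ_nonempty_iff.mpr (Fin.pos_iff_nonempty.mp hK))
    fun k => max (x k / y k) (y k / x k)

theorem thompsonDist_eq_log_ratio (x y : Fin K → ℝ) :
    thompsonDist hK x y = Real.log (ratio hK x y) := rfl

theorem ratio_comm (x y : Fin K → ℝ) : ratio hK x y = ratio hK y x := by
  simp only [ratio, max_comm]

theorem le_ratio_mul {x y : Fin K → ℝ} {k : Fin K} (hy : 0 < y k) :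
    x k ≤ ratio hK x y * y k :=
  (div_le_iff₀ hy).1 <| (le_max_left _ _).trans <|
    Finset.le_sup' (fun k => max (x k / y k) (y k / x k)) (Finset.mem_univ k)

theorem one_le_ratio {x y : Fin K → ℝ} (hx : ∀ k, 0 < x k) (hy : ∀ k, 0 < y k) :
    1 ≤ ratio hK x y := by
  let k : Fin K := ⟨0, hK⟩
  have hxy := le_ratio_mul hK (x := x) (hy k)
  have hyx := le_ratio_mul hK (x := y) (hx k)
  rw [ratio_comm] at hyx
  by_contra! h
  nlinarith [hx k, hy k]

theorem ratio_le {x y : Fin K → ℝ} (hx : ∀ k, 0 < x k) (hy : ∀ k, 0 < y k) {c : ℝ}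
    (h : ∀ k, x k ≤ c * y k ∧ y k ≤ c * x k) : ratio hK x y ≤ c :=
  Finset.sup'_le _ _ fun k _ =>
    max_le ((div_le_iff₀ (hy k)).2 (h k).1) ((div_le_iff₀ (hx k)).2 (h k).2)

end Thompson

open Thompson in
theorem stmt9 {K : ℕ} (hK : 0 < K) (T : (Fin K → ℝ) → (Fin K → ℝ))
    (hT : ∀ k : Fin K, IsStdIF (fun p => T p k))
    (p q : Fin K → ℝ) (hp : ∀ i, 0 < p i) (hq : ∀ i, 0 < q i) :
    thompsonDist hK (T p) (T q) ≤ thompsonDist hK p q := by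
  have hS := one_le_ratio hK hp hq
  have hTp : ∀ k, 0 < T p k := fun k => (hT k).1 p fun i => (hp i).le
  have hTq : ∀ k, 0 < T q k := fun k => (hT k).1 q fun i => (hq i).le
  have hbound : ∀ k, T p k ≤ ratio hK p q * T q k ∧ T q k ≤ ratio hK p q * T p k :=
    fun k =>
      ⟨(hT k).le_mul_of_le_mul hS (fun i => (hq i).le) (fun i => (hp i).le)
          fun i => le_ratio_mul hK (hq i),
        (hT k).le_mul_of_le_mul hS (fun i => (hp i).le) (fun i => (hq i).le)
          fun i => ratio_comm hK p q ▸ le_ratio_mul hK (hp i)⟩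
  rw [thompsonDist_eq_log_ratio, thompsonDist_eq_log_ratio]
  exact Real.log_le_log (one_pos.trans_le (one_le_ratio hK hTp hTq))
    (ratio_le hK hTp hTq hbound)
end

section
/- Let T : ℝ₊^K → ℝ₊₊^K be a standard interference mapping, let ‖·‖ be a monotone norm on ℝ^K, and let P > 0. Then the normalized mapping T̃(p) := (P / ‖T(p)‖) · T(p) has exactly one fixed point in ℝ₊₊^K. -/
open Finset Filter Function Topology Set

section MaxRatio

variable {ι : Type*} [Fintype ι] [Nonempty ι]

noncomputable def maxRatio (x y : ι → ℝ) : ℝ :=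
  univ.sup' univ_nonempty fun k => x k / y k

variable {x y : ι → ℝ}

lemma le_maxRatio_mul (hy : ∀ k, 0 < y k) (k : ι) : x k ≤ maxRatio x y * y k :=
  (div_le_iff₀ (hy k)).1 (le_sup' (fun k => x k / y k) (mem_univ k))

lemma maxRatio_le {a : ℝ} (hy : ∀ k, 0 < y k) (h : ∀ k, x k ≤ a * y k) : maxRatio x y ≤ a :=
  sup'_le _ _ fun k _ => (div_le_iff₀ (hy k)).2 (h k)

lemma maxRatio_lt {a : ℝ} (hy : ∀ k, 0 < y k) (h : ∀ k, x k < a * y k) : maxRatio x y < a :=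
  (sup'_lt_iff _).2 fun k _ => (div_lt_iff₀ (hy k)).2 (h k)

lemma maxRatio_pos (hx : ∀ k, 0 < x k) (hy : ∀ k, 0 < y k) : 0 < maxRatio x y :=
  let k := Classical.arbitrary ι
  (div_pos (hx k) (hy k)).trans_le (le_sup' (fun k => x k / y k) (mem_univ k))

lemma maxRatio_smul_smul {c d : ℝ} (hc : 0 < c) (hd : 0 < d) :
    maxRatio (c • x) (d • y) = c / d * maxRatio x y := by
  simp only [maxRatio, mul₀_sup' (div_pos hc hd).le, Pi.smul_apply, smul_eq_mul,
    mul_div_mul_comm]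

lemma eq_of_maxRatio_le_one (hx : ∀ k, 0 < x k) (hy : ∀ k, 0 < y k)
    (hxy : maxRatio x y ≤ 1) (hyx : maxRatio y x ≤ 1) : x = y := by
  funext k
  have h₁ := (le_maxRatio_mul (x := x) hy k).trans (mul_le_of_le_one_left (hy k).le hxy)
  have h₂ := (le_maxRatio_mul (x := y) hx k).trans (mul_le_of_le_one_left (hx k).le hyx)
  exact h₁.antisymm h₂

lemma ContinuousAt.maxRatio {α : Type*} [TopologicalSpace α] {f g : α → ι → ℝ} {a : α}
    (hf : ContinuousAt f a) (hg : ContinuousAt g a) (hga : ∀ k, 0 < g a k) :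
    ContinuousAt (fun t => maxRatio (f t) (g t)) a :=
  ContinuousAt.finset_sup'_apply _ fun k _ =>
    ((continuousAt_apply k _).comp hf).div ((continuousAt_apply k _).comp hg) (hga k).ne'

-- `log (hilbertRatio x y)` is Hilbert's projective metric between `x` and `y`.
noncomputable def hilbertRatio (x y : ι → ℝ) : ℝ := maxRatio x y * maxRatio y x

lemma hilbertRatio_smul_smul {c d : ℝ} (hc : 0 < c) (hd : 0 < d) :
    hilbertRatio (c • x) (d • y) = hilbertRatio x y := by
  rw [hilbertRatio, hilbertRatio, maxRatio_smul_smul hc hd, maxRatio_smul_smul hd hc]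
  field_simp

end MaxRatio

section MonotoneSeminorm

variable {ι : Type*} {N : Seminorm ℝ (ι → ℝ)}

lemma mul_seminorm_single_le
    (hmono : ∀ x y : ι → ℝ, (∀ i, 0 ≤ x i) → (∀ i, x i ≤ y i) → N x ≤ N y)
    [DecidableEq ι] {x : ι → ℝ} (hx : ∀ i, 0 ≤ x i) (k : ι) :
    x k * N (Pi.single k 1) ≤ N x := by
  rw [← Real.norm_of_nonneg (hx k), ← map_smul_eq_mul]
  refine hmono _ _ (fun i => ?_) fun i => ?_ <;>
    rcases eq_or_ne i k with rfl | hik <;> simp [*]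

lemma exists_forall_le_of_seminorm_le [Finite ι] (hpos : ∀ x : ι → ℝ, x ≠ 0 → 0 < N x)
    (hmono : ∀ x y : ι → ℝ, (∀ i, 0 ≤ x i) → (∀ i, x i ≤ y i) → N x ≤ N y) (P : ℝ) :
    ∃ b, ∀ x : ι → ℝ, (∀ i, 0 ≤ x i) → N x ≤ P → ∀ k, x k ≤ b := by
  classical
  obtain ⟨b, hb⟩ := (Set.finite_range fun k : ι => P / N (Pi.single k 1)).bddAbove
  refine ⟨b, fun x hx hxP k => le_trans ?_ (hb ⟨k, rfl⟩)⟩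
  have hk : 0 < N (Pi.single k 1) := hpos _ (by simp)
  exact (le_div_iff₀ hk).2 ((mul_seminorm_single_le hmono hx k).trans hxP)

lemma one_le_maxRatio_of_seminorm_eq [Fintype ι] [Nonempty ι]
    (hmono : ∀ x y : ι → ℝ, (∀ i, 0 ≤ x i) → (∀ i, x i ≤ y i) → N x ≤ N y)
    {x y : ι → ℝ} (hx : ∀ k, 0 < x k) (hy : ∀ k, 0 < y k) (hNy : 0 < N y) (hxy : N x = N y) :
    1 ≤ maxRatio x y := by
  have h : N x ≤ N (maxRatio x y • y) := hmono _ _ (fun k => (hx k).le) (le_maxRatio_mul hy)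
  rw [map_smul_eq_mul, Real.norm_of_nonneg (maxRatio_pos hx hy).le, hxy] at h
  exact (le_mul_iff_one_le_left hNy).1 h

end MonotoneSeminorm

lemma eventually_pos_and_le_mul_and_le_mul {ι : Type*} [Finite ι] {p : ι → ℝ}
    (hp : ∀ i, 0 < p i) {α : ℝ} (hα : 1 < α) :
    ∀ᶠ q in 𝓝 p, ∀ i, 0 < q i ∧ q i ≤ α * p i ∧ p i ≤ α * q i := by
  have hα₀ : 0 < α := one_pos.trans hα
  refine eventually_all.2 fun i => ?_
  have hlo : p i / α < p i := div_lt_self (hp i) hα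
  have hhi : p i < α * p i := lt_mul_left (hp i) hα
  filter_upwards [(continuous_apply i).continuousAt.eventually (Ioo_mem_nhds hlo hhi)]
    with q ⟨hlo, hhi⟩
  exact ⟨(div_pos (hp i) hα₀).trans hlo, hhi.le, ((div_lt_iff₀' hα₀).1 hlo).le⟩

namespace IsStdIF

variable {K : ℕ} {f : (Fin K → ℝ) → ℝ}

lemma lt_mul_of_le (hf : IsStdIF f) {p q : Fin K → ℝ} (hp : ∀ i, 0 ≤ p i) (hq : ∀ i, 0 ≤ q i)
    {α : ℝ} (hα : 1 < α) (h : ∀ i, q i ≤ α * p i) : f q < α * f p :=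
  (hf.2.1 _ q hq h).trans_lt (hf.2.2 p hp α hα)

lemma le_mul_of_le (hf : IsStdIF f) {p q : Fin K → ℝ} (hp : ∀ i, 0 ≤ p i) (hq : ∀ i, 0 ≤ q i)
    {α : ℝ} (hα : 1 ≤ α) (h : ∀ i, q i ≤ α * p i) : f q ≤ α * f p := by
  rcases hα.eq_or_lt with rfl | hα
  · simpa using hf.2.1 p q hq (by simpa using h)
  · exact (hf.lt_mul_of_le hp hq hα h).le

lemma continuousAt (hf : IsStdIF f) {p : Fin K → ℝ} (hp : ∀ i, 0 < p i) : ContinuousAt f p := by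
  have hfp : 0 < f p := hf.1 p fun i => (hp i).le
  refine tendsto_order.2 ⟨fun a ha => ?_, fun b hb => ?_⟩
  · rcases le_or_gt a 0 with ha₀ | ha₀
    · filter_upwards [eventually_pos_and_le_mul_and_le_mul hp one_lt_two] with q hq
      exact ha₀.trans_lt (hf.1 q fun i => (hq i).1.le)
    · filter_upwards [eventually_pos_and_le_mul_and_le_mul hp ((one_lt_div ha₀).2 ha)] with q hq
      have := hf.lt_mul_of_le (fun i => (hq i).1.le) (fun i => (hp i).le)
        ((one_lt_div ha₀).2 ha) fun i => (hq i).2.2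
      rwa [div_mul_eq_mul_div, lt_div_iff₀ ha₀, mul_lt_mul_iff_right₀ hfp] at this
  · filter_upwards [eventually_pos_and_le_mul_and_le_mul hp ((one_lt_div hfp).2 hb)] with q hq
    simpa [div_mul_cancel₀ b hfp.ne'] using
      hf.lt_mul_of_le (fun i => (hp i).le) (fun i => (hq i).1.le) ((one_lt_div hfp).2 hb)
        fun i => (hq i).2.1

end IsStdIF

section StandardMapping

variable {K : ℕ} [Nonempty (Fin K)] {T : (Fin K → ℝ) → Fin K → ℝ}

lemma maxRatio_map_le (hT : ∀ k, IsStdIF fun p => T p k) {x y : Fin K → ℝ}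
    (hx : ∀ k, 0 < x k) (hy : ∀ k, 0 < y k) (h : 1 ≤ maxRatio x y) :
    maxRatio (T x) (T y) ≤ maxRatio x y :=
  maxRatio_le (fun k => (hT k).1 y fun i => (hy i).le) fun k =>
    (hT k).le_mul_of_le (fun i => (hy i).le) (fun i => (hx i).le) h (le_maxRatio_mul hy)

lemma maxRatio_map_lt (hT : ∀ k, IsStdIF fun p => T p k) {x y : Fin K → ℝ}
    (hx : ∀ k, 0 < x k) (hy : ∀ k, 0 < y k) (h : 1 < maxRatio x y) :
    maxRatio (T x) (T y) < maxRatio x y :=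
  maxRatio_lt (fun k => (hT k).1 y fun i => (hy i).le) fun k =>
    (hT k).lt_mul_of_le (fun i => (hy i).le) (fun i => (hx i).le) h (le_maxRatio_mul hy)

lemma hilbertRatio_map_lt (hT : ∀ k, IsStdIF fun p => T p k) {x y : Fin K → ℝ}
    (hx : ∀ k, 0 < x k) (hy : ∀ k, 0 < y k) (hxy : x ≠ y)
    (h₁ : 1 ≤ maxRatio x y) (h₂ : 1 ≤ maxRatio y x) :
    hilbertRatio (T x) (T y) < hilbertRatio x y := by
  have hTx : ∀ k, 0 < T x k := fun k => (hT k).1 x fun i => (hx i).le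
  have hTy : ∀ k, 0 < T y k := fun k => (hT k).1 y fun i => (hy i).le
  rcases h₁.eq_or_lt with h₁ | h₁
  · have h₂ : 1 < maxRatio y x :=
      h₂.lt_of_ne fun h₂ => hxy (eq_of_maxRatio_le_one hx hy h₁.ge h₂.ge)
    exact mul_lt_mul' (maxRatio_map_le hT hx hy h₁.le) (maxRatio_map_lt hT hy hx h₂)
      (maxRatio_pos hTy hTx).le (maxRatio_pos hx hy)
  · exact mul_lt_mul (maxRatio_map_lt hT hx hy h₁) (maxRatio_map_le hT hy hx h₂)
      (maxRatio_pos hTy hTx) (maxRatio_pos hx hy).le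

end StandardMapping

lemma Seminorm.continuous_of_finiteDimensional {E : Type*} [NormedAddCommGroup E]
    [NormedSpace ℝ E] [FiniteDimensional ℝ E] (N : Seminorm ℝ E) : Continuous N :=
  continuousOn_univ.1 (N.convexOn.continuousOn isOpen_univ)

section NormalizedMap

variable {K : ℕ} {T : (Fin K → ℝ) → Fin K → ℝ} {N : Seminorm ℝ (Fin K → ℝ)} {P : ℝ}

noncomputable def normalizedMap (T : (Fin K → ℝ) → Fin K → ℝ) (ν : (Fin K → ℝ) → ℝ) (P : ℝ)
    (p : Fin K → ℝ) : Fin K → ℝ :=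
  (P / ν (T p)) • T p

variable [Nonempty (Fin K)]

lemma seminorm_map_pos (hpos : ∀ x : Fin K → ℝ, x ≠ 0 → 0 < N x)
    (hT : ∀ k, IsStdIF fun p => T p k) {p : Fin K → ℝ} (hp : ∀ i, 0 ≤ p i) : 0 < N (T p) :=
  hpos _ fun h => ((hT (Classical.arbitrary _)).1 p hp).ne' (congrFun h _)

lemma seminorm_normalizedMap (hpos : ∀ x : Fin K → ℝ, x ≠ 0 → 0 < N x)
    (hT : ∀ k, IsStdIF fun p => T p k) (hP : 0 ≤ P) {p : Fin K → ℝ} (hp : ∀ i, 0 ≤ p i) :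
    N (normalizedMap T N P p) = P := by
  have hNT := seminorm_map_pos hpos hT hp
  rw [normalizedMap, map_smul_eq_mul, Real.norm_of_nonneg (div_nonneg hP hNT.le),
    div_mul_cancel₀ _ hNT.ne']

lemma normalizedMap_pos (hpos : ∀ x : Fin K → ℝ, x ≠ 0 → 0 < N x)
    (hT : ∀ k, IsStdIF fun p => T p k) (hP : 0 < P) {p : Fin K → ℝ} (hp : ∀ i, 0 ≤ p i)
    (k : Fin K) : 0 < normalizedMap T N P p k :=
  mul_pos (div_pos hP (seminorm_map_pos hpos hT hp)) ((hT k).1 p hp)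

lemma hilbertRatio_normalizedMap_lt (hpos : ∀ x : Fin K → ℝ, x ≠ 0 → 0 < N x)
    (hmono : ∀ x y : Fin K → ℝ, (∀ i, 0 ≤ x i) → (∀ i, x i ≤ y i) → N x ≤ N y)
    (hT : ∀ k, IsStdIF fun p => T p k) (hP : 0 < P) {x y : Fin K → ℝ}
    (hx : ∀ k, 0 < x k) (hy : ∀ k, 0 < y k) (hNx : N x = P) (hNy : N y = P) (hxy : x ≠ y) :
    hilbertRatio (normalizedMap T N P x) (normalizedMap T N P y) < hilbertRatio x y := by
  rw [normalizedMap, normalizedMap,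
    hilbertRatio_smul_smul (div_pos hP (seminorm_map_pos hpos hT fun i => (hx i).le))
      (div_pos hP (seminorm_map_pos hpos hT fun i => (hy i).le))]
  exact hilbertRatio_map_lt hT hx hy hxy
    (one_le_maxRatio_of_seminorm_eq hmono hx hy (hNy ▸ hP) (hNx.trans hNy.symm))
    (one_le_maxRatio_of_seminorm_eq hmono hy hx (hNx ▸ hP) (hNy.trans hNx.symm))

lemma continuousAt_normalizedMap (hpos : ∀ x : Fin K → ℝ, x ≠ 0 → 0 < N x)
    (hT : ∀ k, IsStdIF fun p => T p k) {p : Fin K → ℝ} (hp : ∀ i, 0 < p i) :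
    ContinuousAt (normalizedMap T N P) p := by
  have hTc : ContinuousAt T p := continuousAt_pi.2 fun k => (hT k).continuousAt hp
  exact (continuousAt_const.div (N.continuous_of_finiteDimensional.continuousAt.comp hTc)
    (seminorm_map_pos hpos hT fun i => (hp i).le).ne').smul hTc

lemma continuousAt_hilbertRatio_normalizedMap (hpos : ∀ x : Fin K → ℝ, x ≠ 0 → 0 < N x)
    (hT : ∀ k, IsStdIF fun p => T p k) (hP : 0 < P) {p : Fin K → ℝ} (hp : ∀ i, 0 < p i) :
    ContinuousAt (fun q => hilbertRatio q (normalizedMap T N P q)) p :=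
  (continuousAt_id.maxRatio (continuousAt_normalizedMap hpos hT hp)
    (normalizedMap_pos hpos hT hP fun i => (hp i).le)).mul
    ((continuousAt_normalizedMap hpos hT hp).maxRatio continuousAt_id hp)

lemma exists_pos_le_normalizedMap (hpos : ∀ x : Fin K → ℝ, x ≠ 0 → 0 < N x)
    (hmono : ∀ x y : Fin K → ℝ, (∀ i, 0 ≤ x i) → (∀ i, x i ≤ y i) → N x ≤ N y)
    (hT : ∀ k, IsStdIF fun p => T p k) (hP : 0 < P) :
    ∃ a : Fin K → ℝ, (∀ k, 0 < a k) ∧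
      ∀ p, (∀ i, 0 ≤ p i) → N p = P → ∀ k, a k ≤ normalizedMap T N P p k := by
  obtain ⟨b, hb⟩ := exists_forall_le_of_seminorm_le hpos hmono P
  have hb₀ : 0 ≤ b := hb 0 (fun _ => le_rfl) (by simpa using hP.le) (Classical.arbitrary _)
  have hC : 0 < N (T fun _ => b) := seminorm_map_pos hpos hT fun _ => hb₀
  have hT₀ : ∀ k, 0 < T 0 k := fun k => (hT k).1 0 fun _ => le_rfl
  refine ⟨(P / N (T fun _ => b)) • T 0, fun k => mul_pos (div_pos hP hC) (hT₀ k),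
    fun p hp hNp k => ?_⟩
  have hNTp := seminorm_map_pos hpos hT hp
  have hTp : N (T p) ≤ N (T fun _ => b) :=
    hmono _ _ (fun i => ((hT i).1 p hp).le) fun i => (hT i).2.1 _ p hp (hb p hp hNp.le)
  exact mul_le_mul (div_le_div_of_nonneg_left hP.le hNTp hTp)
    ((hT k).2.1 p 0 (fun _ => le_rfl) hp) (hT₀ k).le (div_nonneg hP.le hNTp.le)

lemma exists_isCompact_mapsTo_normalizedMap (hpos : ∀ x : Fin K → ℝ, x ≠ 0 → 0 < N x)
    (hmono : ∀ x y : Fin K → ℝ, (∀ i, 0 ≤ x i) → (∀ i, x i ≤ y i) → N x ≤ N y)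
    (hT : ∀ k, IsStdIF fun p => T p k) (hP : 0 < P) :
    ∃ X : Set (Fin K → ℝ), IsCompact X ∧ X.Nonempty ∧ MapsTo (normalizedMap T N P) X X ∧
      (∀ p ∈ X, (∀ i, 0 < p i) ∧ N p = P) ∧
      ∀ p, (∀ i, 0 < p i) → normalizedMap T N P p = p → p ∈ X := by
  obtain ⟨a, ha, haT⟩ := exists_pos_le_normalizedMap hpos hmono hT hP
  obtain ⟨b, hb⟩ := exists_forall_le_of_seminorm_le hpos hmono P
  have hX : ∀ p ∈ Ici a ∩ {p | N p = P}, ∀ i, 0 < p i := fun p hp i => (ha i).trans_le (hp.1 i)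
  have hmaps : ∀ p, (∀ i, 0 ≤ p i) → N p = P → normalizedMap T N P p ∈ Ici a ∩ {p | N p = P} :=
    fun p hp hNp => ⟨haT p hp hNp, seminorm_normalizedMap hpos hT hP.le hp⟩
  refine ⟨Ici a ∩ {p | N p = P}, ?_, ?_, fun p hp => hmaps p (fun i => (hX p hp i).le) hp.2,
    fun p hp => ⟨hX p hp, hp.2⟩, fun p hp hfix => ?_⟩
  · refine (isCompact_Icc (b := fun _ => b)).of_isClosed_subset
      (isClosed_Ici.inter (isClosed_eq N.continuous_of_finiteDimensional continuous_const))
      fun p hp => ⟨hp.1, hb p (fun i => (hX p hp i).le) hp.2.le⟩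
  · have h₀ : ∀ i, 0 ≤ normalizedMap T N P 0 i :=
      fun i => (normalizedMap_pos hpos hT hP (fun _ => le_rfl) i).le
    exact ⟨_, hmaps _ h₀ (seminorm_normalizedMap hpos hT hP.le fun _ => le_rfl)⟩
  · have hp₀ : ∀ i, 0 ≤ p i := fun i => (hp i).le
    rw [← hfix]
    exact hmaps p hp₀ (hfix ▸ seminorm_normalizedMap hpos hT hP.le hp₀)

end NormalizedMap

theorem exists_unique_isFixedPt_of_isCompact {α : Type*} [TopologicalSpace α] {X : Set α}
    {g : α → α} {D : α → α → ℝ} (hX : IsCompact X) (hne : X.Nonempty) (hg : MapsTo g X X)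
    (hD : ContinuousOn (fun x => D x (g x)) X)
    (hcontr : ∀ x ∈ X, ∀ y ∈ X, x ≠ y → D (g x) (g y) < D x y) :
    ∃! x, x ∈ X ∧ IsFixedPt g x := by
  obtain ⟨x, hx, hmin⟩ := hX.exists_isMinOn hne hD
  have hfix : IsFixedPt g x := by
    by_contra h
    exact (hcontr x hx _ (hg hx) (Ne.symm h)).not_ge (hmin (hg hx))
  refine ⟨x, ⟨hx, hfix⟩, fun y ⟨hy, hyfix⟩ => ?_⟩
  by_contra hyx
  have := hcontr y hy x hx hyx
  rw [hyfix.eq, hfix.eq] at this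
  exact this.false

theorem stmt10_general {K : ℕ} (T : (Fin K → ℝ) → (Fin K → ℝ))
    (hT : ∀ k : Fin K, IsStdIF (fun p => T p k))
    (ν : (Fin K → ℝ) → ℝ)
    (hν_pos : ∀ x : Fin K → ℝ, x ≠ 0 → 0 < ν x)
    (hν_smul : ∀ (c : ℝ) (x : Fin K → ℝ), ν (c • x) = |c| * ν x)
    (hν_add : ∀ x y : Fin K → ℝ, ν (x + y) ≤ ν x + ν y)
    (hν_mono : ∀ x y : Fin K → ℝ, (∀ i, 0 ≤ x i) → (∀ i, x i ≤ y i) → ν x ≤ ν y)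
    (P : ℝ) (hP : 0 < P) :
    ∃! p : Fin K → ℝ, (∀ i, 0 < p i) ∧ (P / ν (T p)) • T p = p := by
  rcases isEmpty_or_nonempty (Fin K) with hK | hK
  · exact ⟨0, ⟨isEmptyElim, Subsingleton.elim _ _⟩, fun _ _ => Subsingleton.elim _ _⟩
  let N : Seminorm ℝ (Fin K → ℝ) := Seminorm.of ν hν_add hν_smul
  obtain ⟨X, hX, hXne, hmaps, hXpos, hfixX⟩ :=
    exists_isCompact_mapsTo_normalizedMap (N := N) hν_pos hν_mono hT hP
  have hD : ContinuousOn (fun p => hilbertRatio p (normalizedMap T N P p)) X := fun p hp =>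
    (continuousAt_hilbertRatio_normalizedMap hν_pos hT hP (hXpos p hp).1).continuousWithinAt
  obtain ⟨p, ⟨hpX, hp⟩, huniq⟩ := exists_unique_isFixedPt_of_isCompact hX hXne hmaps hD
    fun x hx y hy => hilbertRatio_normalizedMap_lt hν_pos hν_mono hT hP
      (hXpos x hx).1 (hXpos y hy).1 (hXpos x hx).2 (hXpos y hy).2
  exact ⟨p, ⟨(hXpos p hpX).1, hp⟩, fun q ⟨hq, hqfix⟩ => huniq q ⟨hfixX q hq hqfix, hqfix⟩⟩

theorem stmt10 {K : ℕ} (T : (Fin K → ℝ) → (Fin K → ℝ))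
    (hT : ∀ k : Fin K, IsStdIF (fun p => T p k))
    (ν : (Fin K → ℝ) → ℝ)
    (hν_pos : ∀ x : Fin K → ℝ, x ≠ 0 → 0 < ν x) (hν0 : ν 0 = 0)
    (hν_smul : ∀ (c : ℝ) (x : Fin K → ℝ), ν (c • x) = |c| * ν x)
    (hν_add : ∀ x y : Fin K → ℝ, ν (x + y) ≤ ν x + ν y)
    (hν_mono : ∀ x y : Fin K → ℝ, (∀ i, 0 ≤ x i) → (∀ i, x i ≤ y i) → ν x ≤ ν y)
    (P : ℝ) (hP : 0 < P) :
    ∃! p : Fin K → ℝ, (∀ i, 0 < p i) ∧ (P / ν (T p)) • T p = p :=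
  stmt10_general T hT ν hν_pos hν_smul hν_add hν_mono P hP
end

section
/- Let S ⊂ ℝ₊^K be a compact convex set with nonempty interior that is downward comprehensive on ℝ₊^K. Then the Minkowski functional ‖p‖ := inf{γ > 0 : (1/γ)p ∈ conv(−S ∪ S)} of conv(−S ∪ S) is a monotone norm on ℝ^K, and S = {p ∈ ℝ₊^K : ‖p‖ ≤ 1}. -/
theorem stmt12 {K : ℕ} (S : Set (Fin K → ℝ))
    (hS_sub : ∀ p ∈ S, ∀ i, 0 ≤ p i)
    (hS_compact : IsCompact S) (hS_convex : Convex ℝ S)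
    (hS_int : (interior S).Nonempty)
    (hS_comp : ∀ x : Fin K → ℝ, (∀ i, 0 ≤ x i) → ∀ y ∈ S, (∀ i, x i ≤ y i) → x ∈ S) :
    (∀ x : Fin K → ℝ, 0 ≤ gauge (convexHull ℝ ((-S) ∪ S)) x) ∧
    (∀ x : Fin K → ℝ, gauge (convexHull ℝ ((-S) ∪ S)) x = 0 ↔ x = 0) ∧
    (∀ (c : ℝ) (x : Fin K → ℝ),
      gauge (convexHull ℝ ((-S) ∪ S)) (c • x) = |c| * gauge (convexHull ℝ ((-S) ∪ S)) x) ∧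
    (∀ x y : Fin K → ℝ,
      gauge (convexHull ℝ ((-S) ∪ S)) (x + y) ≤
        gauge (convexHull ℝ ((-S) ∪ S)) x + gauge (convexHull ℝ ((-S) ∪ S)) y) ∧
    (∀ x y : Fin K → ℝ, (∀ i, 0 ≤ x i) → (∀ i, x i ≤ y i) →
      gauge (convexHull ℝ ((-S) ∪ S)) x ≤ gauge (convexHull ℝ ((-S) ∪ S)) y) ∧
    S = {p : Fin K → ℝ | (∀ i, 0 ≤ p i) ∧ gauge (convexHull ℝ ((-S) ∪ S)) p ≤ 1} := by
  set C : Set (Fin K → ℝ) := convexHull ℝ ((-S) ∪ S) with hC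
  obtain ⟨y₀, hy₀⟩ := hS_int
  have hy₀S : y₀ ∈ S := interior_subset hy₀
  have h0S : (0 : Fin K → ℝ) ∈ S :=
    hS_comp 0 (fun i => le_rfl) y₀ hy₀S (fun i => hS_sub y₀ hy₀S i)
  have hSne : S.Nonempty := ⟨0, h0S⟩
  have hnSne : (-S : Set (Fin K → ℝ)).Nonempty := ⟨0, by simpa using h0S⟩
  have hCeq : C = convexJoin ℝ (-S) S :=
    hS_convex.neg.convexHull_union hS_convex hnSne hSne
  -- key structural lemma
  have key : ∀ z ∈ C, ∀ w : Fin K → ℝ, (∀ i, 0 ≤ w i) → (∀ i, w i ≤ z i) → w ∈ S := by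
    intro z hz w hw hwz
    rw [hCeq, mem_convexJoin] at hz
    obtain ⟨a, ha, b, hb, hseg⟩ := hz
    obtain ⟨u, v, hu, hv, huv, rfl⟩ := hseg
    have haS : -a ∈ S := Set.mem_neg.1 ha
    have hai : ∀ i, a i ≤ 0 := fun i => by
      have := hS_sub (-a) haS i
      simpa using this
    have hz' : ∀ i, w i ≤ u * a i + v * b i := fun i => by simpa using hwz i
    rcases eq_or_lt_of_le hv with hv0 | hvpos
    · have hw0 : w = 0 := by
        funext i
        have h1 : u * a i ≤ 0 := mul_nonpos_iff.2 (Or.inl ⟨hu, hai i⟩)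
        have := hz' i
        rw [← hv0] at this
        have : w i ≤ 0 := by linarith
        exact le_antisymm this (hw i)
      rw [hw0]; exact h0S
    · have hbmem : v⁻¹ • w ∈ S := by
        refine hS_comp _ (fun i => mul_nonneg (inv_nonneg.2 hvpos.le) (hw i)) b hb
          (fun i => ?_)
        show v⁻¹ * w i ≤ b i
        rw [inv_mul_le_iff₀ hvpos]
        have h1 : u * a i ≤ 0 := mul_nonpos_iff.2 (Or.inl ⟨hu, hai i⟩)
        have := hz' i
        linarith
      have hmem := hS_convex h0S hbmem hu hvpos.le huv
      have : u • (0 : Fin K → ℝ) + v • v⁻¹ • w = w := by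
        simp [smul_smul, mul_inv_cancel₀ hvpos.ne']
      rwa [this] at hmem
  have SsubC : S ⊆ C := (Set.subset_union_right).trans (subset_convexHull ℝ _)
  have nSsubC : (-S : Set (Fin K → ℝ)) ⊆ C :=
    (Set.subset_union_left).trans (subset_convexHull ℝ _)
  have hCconv : Convex ℝ C := convex_convexHull ℝ _
  have hCneg : -C = C := by
    rw [hC, ← convexHull_neg]
    congr 1
    ext x
    simp [Set.mem_neg, or_comm]
  have hsymm : ∀ x ∈ C, -x ∈ C := by
    intro x hx
    rw [← hCneg]
    exact Set.neg_mem_neg.2 hx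
  have hbal : Balanced ℝ C := (balanced_iff_neg_mem hCconv).2 hsymm
  have h0int : (0 : Fin K → ℝ) ∈ interior C := by
    have h1 : y₀ ∈ interior C := interior_mono SsubC hy₀
    have h2 : -y₀ ∈ interior C := by
      have h3 : -y₀ ∈ interior (-S : Set (Fin K → ℝ)) :=
        interior_maximal (Set.neg_subset_neg.2 interior_subset)
          isOpen_interior.neg (Set.neg_mem_neg.2 hy₀)
      exact interior_mono nSsubC h3
    have h0 := hCconv.interior h1 h2 (by norm_num : (0:ℝ) ≤ 1/2)
      (by norm_num : (0:ℝ) ≤ 1/2) (by norm_num)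
    simpa using h0
  have h0C : (0 : Fin K → ℝ) ∈ C := interior_subset h0int
  have habs : Absorbent ℝ C := absorbent_nhds_zero (mem_interior_iff_mem_nhds.1 h0int)
  have hCbdd : Bornology.IsBounded C := by
    obtain ⟨R, hR⟩ :=
      ((hS_compact.isBounded.neg).union hS_compact.isBounded).subset_closedBall 0
    have : C ⊆ Metric.closedBall 0 R :=
      convexHull_min hR (convex_closedBall _ _)
    exact Metric.isBounded_closedBall.subset this
  have hvnb : Bornology.IsVonNBounded ℝ C := NormedSpace.isVonNBounded_of_isBounded ℝ hCbdd
  refine ⟨fun x => gauge_nonneg x, fun x => gauge_eq_zero habs hvnb, ?_, ?_, ?_, ?_⟩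
  · intro c x
    rw [gauge_smul hbal, Real.norm_eq_abs]
  · exact gauge_add_le hCconv habs
  · -- monotonicity
    intro x y hx hxy
    rw [gauge_def, gauge_def]
    refine csInf_le_csInf ⟨0, fun r hr => le_of_lt hr.1⟩ habs.gauge_set_nonempty ?_
    rintro r ⟨hr, hry⟩
    have hr0 : (0:ℝ) < r := hr
    have hyC : r⁻¹ • y ∈ C := (Set.mem_smul_set_iff_inv_smul_mem₀ hr0.ne' _ _).1 hry
    refine ⟨hr, (Set.mem_smul_set_iff_inv_smul_mem₀ hr0.ne' _ _).2 ?_⟩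
    refine SsubC (key (r⁻¹ • y) hyC (r⁻¹ • x)
      (fun i => mul_nonneg (inv_nonneg.2 hr0.le) (hx i))
      (fun i => mul_le_mul_of_nonneg_left (hxy i) (inv_nonneg.2 hr0.le)))
  · -- the set equality
    ext p
    constructor
    · intro hp
      exact ⟨hS_sub p hp, gauge_le_one_of_mem (SsubC hp)⟩
    · rintro ⟨hpos, hle⟩
      have hmem : ∀ t : ℝ, 0 ≤ t → t < 1 → t • p ∈ S := by
        intro t ht ht1
        have hg : gauge C (t • p) < 1 := by
          rw [gauge_smul_of_nonneg ht, smul_eq_mul]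
          calc t * gauge C p ≤ t * 1 := mul_le_mul_of_nonneg_left hle ht
            _ = t := mul_one t
            _ < 1 := ht1
        have htpC : t • p ∈ C := gauge_lt_one_subset_self hCconv h0C habs hg
        exact key (t • p) htpC (t • p)
          (fun i => mul_nonneg ht (hpos i)) (fun i => le_rfl)
      have hseq : ∀ n : ℕ, (1 - ((n:ℝ) + 1)⁻¹) • p ∈ S := by
        intro n
        have h1 : (0:ℝ) < (n:ℝ) + 1 := by positivity
        refine hmem _ ?_ ?_
        · have : ((n:ℝ) + 1)⁻¹ ≤ 1 := by
            rw [inv_le_one_iff₀]; right; linarith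
          linarith
        · have : (0:ℝ) < ((n:ℝ) + 1)⁻¹ := by positivity
          linarith
      have htend : Filter.Tendsto (fun n : ℕ => (1 - ((n:ℝ) + 1)⁻¹) • p)
          Filter.atTop (nhds p) := by
        have h1 : Filter.Tendsto (fun n : ℕ => 1 - ((n:ℝ) + 1)⁻¹)
            Filter.atTop (nhds 1) := by
          have h2 : Filter.Tendsto (fun n : ℕ => ((n:ℝ) + 1)⁻¹)
              Filter.atTop (nhds 0) := tendsto_one_div_add_atTop_nhds_zero_nat.congr
                (fun n => by rw [one_div])
          simpa using (tendsto_const_nhds (x := (1:ℝ))).sub h2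
        have := h1.smul_const p
        simpa using this
      exact hS_compact.isClosed.mem_of_tendsto htend
        (Filter.Eventually.of_forall hseq)
end

section
/- If a standard interference function f : ℝ₊^K → ℝ₊₊ is restricted to the open positive orthant ℝ₊₊^K, then this restriction is continuous on ℝ₊₊^K. -/
open Filter Topology

theorem continuousAt_of_forall_eventually_lt_mul {X : Type*} [TopologicalSpace X] {g : X → ℝ}
    {x : X} (hx : 0 < g x)
    (h : ∀ α : ℝ, 1 < α → ∀ᶠ y in 𝓝 x, g y < α * g x ∧ g x < α * g y) :
    ContinuousAt g x := by
  refine tendsto_order.2 ⟨fun a ha => ?_, fun b hb => ?_⟩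
  · set c := max a (g x / 2)
    have hc : 0 < c := lt_max_of_lt_right (half_pos hx)
    have hcx : c < g x := max_lt ha (half_lt_self hx)
    filter_upwards [h (g x / c) ((one_lt_div hc).2 hcx)] with y ⟨_, hy⟩
    calc a ≤ c := le_max_left _ _
      _ < g y := by
        rwa [div_mul_eq_mul_div, lt_div_iff₀ hc, mul_lt_mul_iff_right₀ hx] at hy
  · filter_upwards [h (b / g x) ((one_lt_div hx).2 hb)] with y ⟨hy, _⟩
    rwa [div_mul_cancel₀ _ hx.ne'] at hy

theorem eventually_le_smul_and_le_smul {ι : Type*} [Finite ι] {p : ι → ℝ} (hp : ∀ i, 0 < p i)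
    {α : ℝ} (hα : 1 < α) : ∀ᶠ q in 𝓝 p, q ≤ α • p ∧ p ≤ α • q := by
  have hcoord (i : ι) : ContinuousAt (fun q : ι → ℝ => q i) p := (continuous_apply i).continuousAt
  have hlt (i : ι) : p i < α * p i := lt_mul_left (hp i) hα
  filter_upwards [eventually_all.2 fun i => (hcoord i).eventually_lt continuousAt_const (hlt i),
    eventually_all.2 fun i => continuousAt_const.eventually_lt ((hcoord i).const_mul α) (hlt i)]
    with q hqp hpq
  exact ⟨fun i => (hqp i).le, fun i => (hpq i).le⟩

theorem IsStdIF.lt_mul_of_le_smul {K : ℕ} {f : (Fin K → ℝ) → ℝ} (hf : IsStdIF f)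
    {p q : Fin K → ℝ} (hp : 0 ≤ p) (hq : 0 ≤ q) {α : ℝ} (hα : 1 < α) (hqp : q ≤ α • p) :
    f q < α * f p :=
  (hf.2.1 (α • p) q hq hqp).trans_lt (hf.2.2 p hp α hα)

theorem stmt13 {K : ℕ} (f : (Fin K → ℝ) → ℝ) (hf : IsStdIF f) :
    ContinuousOn f {p : Fin K → ℝ | ∀ i, 0 < p i} := by
  intro p hp
  have hp0 : 0 ≤ p := fun i => (hp i).le
  refine (continuousAt_of_forall_eventually_lt_mul (hf.1 p hp0) fun α hα => ?_).continuousWithinAt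
  filter_upwards [eventually_le_smul_and_le_smul hp hα] with q ⟨hqp, hpq⟩
  have hq0 : 0 ≤ q := fun i =>
    (mul_nonneg_iff_of_pos_left (zero_lt_one.trans hα)).1 ((hp0 i).trans (hpq i))
  exact ⟨hf.lt_mul_of_le_smul hp0 hq0 hα hqp, hf.lt_mul_of_le_smul hq0 hp0 hα hpq⟩
end

section
/- For each k, the function f_k(p) := inf over v ∈ V'_k of (p_k Var(h_k^H v) + Σ_{j≠k} p_j E[|h_j^H v|²] + E[‖v‖²]) / |E[h_k^H v]|², where V'_k := {v ∈ V_k : E[h_k^H v] ≠ 0} is nonempty, is a positive concave function of p on ℝ₊^K, and hence a standard interference function. -/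
open MeasureTheory

/-- Hermitian inner product `a^H b` on `ℂ^M`. -/
noncomputable def ip {M : ℕ} (a b : Fin M → ℂ) : ℂ :=
  ∑ m, (starRingEnd ℂ) (a m) * b m

/-- `E[‖v‖²]` for a random vector `v : Ω → ℂ^M`. -/
noncomputable def eNormSq {Ω : Type*} [MeasurableSpace Ω] (μ : Measure Ω)
    {M : ℕ} (v : Ω → Fin M → ℂ) : ℝ :=
  ∫ ω, ∑ m, ‖v ω m‖ ^ 2 ∂μ

/-- The UatF SINR of user `k`. -/
noncomputable def uatfSINR {Ω : Type*} [MeasurableSpace Ω] (μ : Measure Ω)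
    {M K : ℕ} (h : Fin K → Ω → Fin M → ℂ) (v : Ω → Fin M → ℂ)
    (p : Fin K → ℝ) (k : Fin K) : ℝ :=
  p k * ‖∫ ω, ip (h k ω) (v ω) ∂μ‖ ^ 2 /
    (p k * ((∫ ω, ‖ip (h k ω) (v ω)‖ ^ 2 ∂μ) - ‖∫ ω, ip (h k ω) (v ω) ∂μ‖ ^ 2)
      + ∑ j ∈ Finset.univ.erase k, p j * ∫ ω, ‖ip (h j ω) (v ω)‖ ^ 2 ∂μ
      + eNormSq μ v)

/-- The MSE `E[‖P^{1/2} H^H v − e_k‖²] + E[‖v‖²]`. -/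
noncomputable def mse {Ω : Type*} [MeasurableSpace Ω] (μ : Measure Ω)
    {M K : ℕ} (h : Fin K → Ω → Fin M → ℂ) (v : Ω → Fin M → ℂ)
    (p : Fin K → ℝ) (k : Fin K) : ℝ :=
  (∫ ω, ∑ j, ‖(Real.sqrt (p j) : ℂ) * ip (h j ω) (v ω)
      - (if j = k then (1 : ℂ) else 0)‖ ^ 2 ∂μ) + eNormSq μ v

/-! For fixed `v ∈ V'`, the objective is an affine function of `p` with nonnegative slopes
(the variance and the second moments of `h_j^H v`, divided by `|E[h_k^H v]|²`) and constant term
`E‖v‖² / |E[h_k^H v]|²`, which Cauchy–Schwarz bounds below by `1 / E‖h_k‖² > 0`. An infimum of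
affine functions is concave, nonnegative slopes make it monotone, and constant terms bounded
below by `c₀ > 0` give `f (α • p) ≤ α f p - (α - 1) c₀ < α f p` for `α > 1`. -/

section AffineInf

variable {ι E : Type*} [AddCommGroup E] [Module ℝ E] {S : Set ι} {ℓ : ι → E →ₗ[ℝ] ℝ} {c : ι → ℝ}
  {c₀ : ℝ}

noncomputable def affineInf (S : Set ι) (ℓ : ι → E →ₗ[ℝ] ℝ) (c : ι → ℝ) (p : E) : ℝ :=
  sInf ((fun i => ℓ i p + c i) '' S)

theorem le_affineInf (hS : S.Nonempty) {p : E} {a : ℝ} (h : ∀ i ∈ S, a ≤ ℓ i p + c i) :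
    a ≤ affineInf S ℓ c p :=
  le_csInf (hS.image _) (by rintro _ ⟨i, hi, rfl⟩; exact h i hi)

variable [PartialOrder E]

theorem affineInf_le (hℓ : ∀ i ∈ S, ∀ p, 0 ≤ p → 0 ≤ ℓ i p) (hc : ∀ i ∈ S, c₀ ≤ c i)
    {p : E} (hp : 0 ≤ p) {i : ι} (hi : i ∈ S) : affineInf S ℓ c p ≤ ℓ i p + c i := by
  refine csInf_le ⟨c₀, ?_⟩ ⟨i, hi, rfl⟩
  rintro _ ⟨j, hj, rfl⟩
  linarith [hℓ j hj p hp, hc j hj]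

theorem le_affineInf_of_nonneg (hS : S.Nonempty) (hℓ : ∀ i ∈ S, ∀ p, 0 ≤ p → 0 ≤ ℓ i p)
    (hc : ∀ i ∈ S, c₀ ≤ c i) {p : E} (hp : 0 ≤ p) : c₀ ≤ affineInf S ℓ c p :=
  le_affineInf hS fun i hi => by linarith [hℓ i hi p hp, hc i hi]

theorem affineInf_smul_lt [PosSMulMono ℝ E] (hS : S.Nonempty)
    (hℓ : ∀ i ∈ S, ∀ p, 0 ≤ p → 0 ≤ ℓ i p)
    (hc : ∀ i ∈ S, c₀ ≤ c i) (hc₀ : 0 < c₀) {p : E} (hp : 0 ≤ p) {α : ℝ} (hα : 1 < α) :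
    affineInf S ℓ c (α • p) < α * affineInf S ℓ c p := by
  have hα₀ : 0 < α := by linarith
  have hαp : 0 ≤ α • p := smul_nonneg hα₀.le hp
  suffices affineInf S ℓ c (α • p) + (α - 1) * c₀ ≤ α * affineInf S ℓ c p by
    nlinarith
  rw [← div_le_iff₀' hα₀]
  refine le_affineInf hS fun i hi => ?_
  have hinf := affineInf_le hℓ hc hαp hi
  have hconst : (α - 1) * c₀ ≤ (α - 1) * c i := by gcongr; linarith [hc i hi]
  rw [map_smul, smul_eq_mul] at hinf
  rw [div_le_iff₀' hα₀]
  linarith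

theorem affineInf_mono [IsOrderedAddMonoid E] (hS : S.Nonempty)
    (hℓ : ∀ i ∈ S, ∀ p, 0 ≤ p → 0 ≤ ℓ i p)
    (hc : ∀ i ∈ S, c₀ ≤ c i) {p q : E} (hq : 0 ≤ q) (hqp : q ≤ p) :
    affineInf S ℓ c q ≤ affineInf S ℓ c p :=
  le_affineInf hS fun i hi => by
    have : ℓ i q ≤ ℓ i p := by
      simpa [map_sub] using hℓ i hi (p - q) (sub_nonneg.mpr hqp)
    linarith [affineInf_le hℓ hc hq hi]

theorem concaveOn_affineInf [IsOrderedAddMonoid E] [PosSMulMono ℝ E]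
    (hS : S.Nonempty) (hℓ : ∀ i ∈ S, ∀ p, 0 ≤ p → 0 ≤ ℓ i p)
    (hc : ∀ i ∈ S, c₀ ≤ c i) : ConcaveOn ℝ (Set.Ici 0) (affineInf S ℓ c) := by
  refine ⟨convex_Ici 0, fun x hx y hy a b ha hb hab => le_affineInf hS fun i hi => ?_⟩
  have hx' := affineInf_le hℓ hc hx hi
  have hy' := affineInf_le hℓ hc hy hi
  calc a • affineInf S ℓ c x + b • affineInf S ℓ c y
      ≤ a * (ℓ i x + c i) + b * (ℓ i y + c i) := by
        simp only [smul_eq_mul]; gcongr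
    _ = ℓ i (a • x + b • y) + c i := by
        simp only [map_add, map_smul, smul_eq_mul]
        linear_combination c i * hab

end AffineInf

theorem isStdIF_affineInf {ι : Type*} {K : ℕ} {S : Set ι} {ℓ : ι → (Fin K → ℝ) →ₗ[ℝ] ℝ}
    {c : ι → ℝ} {c₀ : ℝ} (hS : S.Nonempty) (hℓ : ∀ i ∈ S, ∀ p, 0 ≤ p → 0 ≤ ℓ i p)
    (hc : ∀ i ∈ S, c₀ ≤ c i) (hc₀ : 0 < c₀) : IsStdIF (affineInf S ℓ c) :=
  ⟨fun _ hp => hc₀.trans_le (le_affineInf_of_nonneg hS hℓ hc hp),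
    fun _ _ hq hqp => affineInf_mono hS hℓ hc hq hqp,
    fun _ hp _ hα => affineInf_smul_lt hS hℓ hc hc₀ hp hα⟩

section CauchySchwarz

variable {Ω : Type*} [MeasurableSpace Ω] {μ : Measure Ω}

theorem memLp_two_sqrt {F : Ω → ℝ} (hF : Integrable F μ) (hF₀ : 0 ≤ F) :
    MemLp (fun ω => √(F ω)) 2 μ := by
  refine (memLp_two_iff_integrable_sq
    (Real.continuous_sqrt.comp_aestronglyMeasurable hF.1)).2 ?_
  refine hF.congr (Filter.Eventually.of_forall fun ω => ?_)
  simp [Real.sq_sqrt (hF₀ ω)]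

theorem integral_sqrt_mul_sqrt_le {F G : Ω → ℝ} (hF : Integrable F μ) (hG : Integrable G μ)
    (hF₀ : 0 ≤ F) (hG₀ : 0 ≤ G) :
    ∫ ω, √(F ω) * √(G ω) ∂μ ≤ √(∫ ω, F ω ∂μ) * √(∫ ω, G ω ∂μ) := by
  have hHolder := integral_mul_le_Lp_mul_Lq_of_nonneg Real.HolderConjugate.two_two
    (Filter.Eventually.of_forall fun ω => Real.sqrt_nonneg (F ω))
    (Filter.Eventually.of_forall fun ω => Real.sqrt_nonneg (G ω))
    (by simpa using memLp_two_sqrt hF hF₀) (by simpa using memLp_two_sqrt hG hG₀)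
  simp only [Real.rpow_two, Real.sq_sqrt (hF₀ _), Real.sq_sqrt (hG₀ _)] at hHolder
  rwa [← Real.sqrt_eq_rpow, ← Real.sqrt_eq_rpow] at hHolder

theorem norm_integral_sq_le_integral_mul_integral {E : Type*} [NormedAddCommGroup E]
    [NormedSpace ℝ E] {X : Ω → E} {F G : Ω → ℝ} (hF : Integrable F μ) (hG : Integrable G μ)
    (hF₀ : 0 ≤ F) (hG₀ : 0 ≤ G) (hX : ∀ ω, ‖X ω‖ ^ 2 ≤ F ω * G ω) :
    ‖∫ ω, X ω ∂μ‖ ^ 2 ≤ (∫ ω, F ω ∂μ) * ∫ ω, G ω ∂μ := by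
  have hXle : ∀ ω, ‖X ω‖ ≤ √(F ω) * √(G ω) := fun ω => by
    rw [← Real.sqrt_mul (hF₀ ω)]
    exact Real.le_sqrt_of_sq_le (hX ω)
  have hmono : ∫ ω, ‖X ω‖ ∂μ ≤ ∫ ω, √(F ω) * √(G ω) ∂μ :=
    integral_mono_of_nonneg (Filter.Eventually.of_forall fun ω => norm_nonneg _)
      ((memLp_two_sqrt hF hF₀).integrable_mul (memLp_two_sqrt hG hG₀))
      (Filter.Eventually.of_forall hXle)
  calc ‖∫ ω, X ω ∂μ‖ ^ 2 ≤ (√(∫ ω, F ω ∂μ) * √(∫ ω, G ω ∂μ)) ^ 2 := by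
        gcongr
        exact (norm_integral_le_integral_norm X).trans
          (hmono.trans (integral_sqrt_mul_sqrt_le hF hG hF₀ hG₀))
    _ = (∫ ω, F ω ∂μ) * ∫ ω, G ω ∂μ := by
        rw [mul_pow, Real.sq_sqrt (integral_nonneg hF₀), Real.sq_sqrt (integral_nonneg hG₀)]

theorem norm_integral_sq_le_integral_norm_sq [IsProbabilityMeasure μ] {E : Type*}
    [NormedAddCommGroup E] [NormedSpace ℝ E] {X : Ω → E}
    (hX : Integrable (fun ω => ‖X ω‖ ^ 2) μ) :
    ‖∫ ω, X ω ∂μ‖ ^ 2 ≤ ∫ ω, ‖X ω‖ ^ 2 ∂μ := by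
  simpa using norm_integral_sq_le_integral_mul_integral hX (integrable_const (1 : ℝ))
    (fun ω => by positivity) (fun _ => zero_le_one) (fun ω => (mul_one _).ge)

end CauchySchwarz

theorem norm_ip_sq_le {M : ℕ} (a b : Fin M → ℂ) :
    ‖ip a b‖ ^ 2 ≤ (∑ m, ‖a m‖ ^ 2) * ∑ m, ‖b m‖ ^ 2 := by
  have h : ‖ip a b‖ ≤ ∑ m, ‖a m‖ * ‖b m‖ :=
    (norm_sum_le _ _).trans_eq (by simp)
  exact (pow_le_pow_left₀ (norm_nonneg _) h 2).trans (Finset.sum_mul_sq_le_sq_mul_sq _ _ _)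

section Beamforming

variable {Ω : Type*} [MeasurableSpace Ω] {μ : Measure Ω} {M K : ℕ}

theorem norm_integral_ip_sq_le {h v : Ω → Fin M → ℂ}
    (hh : Integrable (fun ω => ∑ m, ‖h ω m‖ ^ 2) μ)
    (hv : Integrable (fun ω => ∑ m, ‖v ω m‖ ^ 2) μ) :
    ‖∫ ω, ip (h ω) (v ω) ∂μ‖ ^ 2 ≤ (∫ ω, ∑ m, ‖h ω m‖ ^ 2 ∂μ) * eNormSq μ v :=
  norm_integral_sq_le_integral_mul_integral hh hv (fun _ => by positivity)
    (fun _ => by positivity) fun ω => norm_ip_sq_le (h ω) (v ω)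

theorem integral_normSq_pos {h v : Ω → Fin M → ℂ}
    (hh : Integrable (fun ω => ∑ m, ‖h ω m‖ ^ 2) μ)
    (hv : Integrable (fun ω => ∑ m, ‖v ω m‖ ^ 2) μ) (hhv : ∫ ω, ip (h ω) (v ω) ∂μ ≠ 0) :
    0 < ∫ ω, ∑ m, ‖h ω m‖ ^ 2 ∂μ := by
  have hCS := norm_integral_ip_sq_le hh hv
  have hv₀ : 0 ≤ eNormSq μ v := integral_nonneg fun _ => by positivity
  have : 0 < ‖∫ ω, ip (h ω) (v ω) ∂μ‖ ^ 2 := by positivity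
  exact pos_of_mul_pos_left (this.trans_le hCS) hv₀

theorem inv_integral_normSq_le {h v : Ω → Fin M → ℂ}
    (hh : Integrable (fun ω => ∑ m, ‖h ω m‖ ^ 2) μ)
    (hv : Integrable (fun ω => ∑ m, ‖v ω m‖ ^ 2) μ) (hhv : ∫ ω, ip (h ω) (v ω) ∂μ ≠ 0) :
    (∫ ω, ∑ m, ‖h ω m‖ ^ 2 ∂μ)⁻¹ ≤ eNormSq μ v / ‖∫ ω, ip (h ω) (v ω) ∂μ‖ ^ 2 := by
  rw [le_div_iff₀ (by positivity), inv_mul_le_iff₀ (integral_normSq_pos hh hv hhv)]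
  exact norm_integral_ip_sq_le hh hv

variable (μ) (h : Fin K → Ω → Fin M → ℂ) (k : Fin K)

noncomputable def interferenceWeight (v : Ω → Fin M → ℂ) (j : Fin K) : ℝ :=
  if j = k then (∫ ω, ‖ip (h k ω) (v ω)‖ ^ 2 ∂μ) - ‖∫ ω, ip (h k ω) (v ω) ∂μ‖ ^ 2
  else ∫ ω, ‖ip (h j ω) (v ω)‖ ^ 2 ∂μ

noncomputable def interferenceForm (v : Ω → Fin M → ℂ) : (Fin K → ℝ) →ₗ[ℝ] ℝ :=
  Fintype.linearCombination ℝ fun j =>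
    interferenceWeight μ h k v j / ‖∫ ω, ip (h k ω) (v ω) ∂μ‖ ^ 2

theorem interferenceForm_add_div_eq (v : Ω → Fin M → ℂ) (p : Fin K → ℝ) :
    interferenceForm μ h k v p + eNormSq μ v / ‖∫ ω, ip (h k ω) (v ω) ∂μ‖ ^ 2 =
      (p k * ((∫ ω, ‖ip (h k ω) (v ω)‖ ^ 2 ∂μ) - ‖∫ ω, ip (h k ω) (v ω) ∂μ‖ ^ 2)
        + ∑ j ∈ Finset.univ.erase k, p j * ∫ ω, ‖ip (h j ω) (v ω)‖ ^ 2 ∂μ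
        + eNormSq μ v) / ‖∫ ω, ip (h k ω) (v ω) ∂μ‖ ^ 2 := by
  have hsum : ∑ j ∈ Finset.univ.erase k, p j • (interferenceWeight μ h k v j /
      ‖∫ ω, ip (h k ω) (v ω) ∂μ‖ ^ 2) = (∑ j ∈ Finset.univ.erase k,
        p j * ∫ ω, ‖ip (h j ω) (v ω)‖ ^ 2 ∂μ) / ‖∫ ω, ip (h k ω) (v ω) ∂μ‖ ^ 2 := by
    rw [Finset.sum_div]
    refine Finset.sum_congr rfl fun j hj => ?_
    rw [interferenceWeight, if_neg (Finset.ne_of_mem_erase hj), smul_eq_mul, mul_div_assoc]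
  rw [interferenceForm, Fintype.linearCombination_apply,
    ← Finset.add_sum_erase _ _ (Finset.mem_univ k), hsum, interferenceWeight, if_pos rfl,
    smul_eq_mul]
  ring

variable {μ} [IsProbabilityMeasure μ]

theorem interferenceForm_nonneg {v : Ω → Fin M → ℂ}
    (hv : Integrable (fun ω => ‖ip (h k ω) (v ω)‖ ^ 2) μ) {p : Fin K → ℝ} (hp : 0 ≤ p) :
    0 ≤ interferenceForm μ h k v p := by
  have hw : ∀ j, 0 ≤ interferenceWeight μ h k v j := fun j => by
    unfold interferenceWeight
    split_ifs
    · exact sub_nonneg.2 (norm_integral_sq_le_integral_norm_sq hv)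
    · exact integral_nonneg fun _ => by positivity
  rw [interferenceForm, Fintype.linearCombination_apply]
  exact Finset.sum_nonneg fun j _ => smul_nonneg (hp j) (div_nonneg (hw j) (by positivity))

end Beamforming

theorem stmt17_general {Ω : Type*} [MeasurableSpace Ω] (μ : Measure Ω) [IsProbabilityMeasure μ]
    {M K : ℕ} (h : Fin K → Ω → Fin M → ℂ) (k : Fin K)
    (hh : ∀ j, Integrable (fun ω => ∑ m, ‖h j ω m‖ ^ 2) μ)
    (V : Set (Ω → Fin M → ℂ))
    (hint2 : ∀ v ∈ V, ∀ j, Integrable (fun ω => ‖ip (h j ω) (v ω)‖ ^ 2) μ)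
    (hint3 : ∀ v ∈ V, Integrable (fun ω => ∑ m, ‖v ω m‖ ^ 2) μ)
    (V' : Set (Ω → Fin M → ℂ))
    (hV' : V' = {v ∈ V | (∫ ω, ip (h k ω) (v ω) ∂μ) ≠ 0})
    (hne : V'.Nonempty)
    (f : (Fin K → ℝ) → ℝ)
    (hfdef : ∀ p : Fin K → ℝ, f p = sInf ((fun v =>
      (p k * ((∫ ω, ‖ip (h k ω) (v ω)‖ ^ 2 ∂μ) - ‖∫ ω, ip (h k ω) (v ω) ∂μ‖ ^ 2)
        + ∑ j ∈ Finset.univ.erase k, p j * ∫ ω, ‖ip (h j ω) (v ω)‖ ^ 2 ∂μ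
        + eNormSq μ v) / ‖∫ ω, ip (h k ω) (v ω) ∂μ‖ ^ 2) '' V')) :
    (∀ p : Fin K → ℝ, (∀ i, 0 ≤ p i) → 0 < f p) ∧
    (∀ x y : Fin K → ℝ, (∀ i, 0 ≤ x i) → (∀ i, 0 ≤ y i) →
      ∀ t : ℝ, 0 ≤ t → t ≤ 1 →
        t * f x + (1 - t) * f y ≤ f (t • x + (1 - t) • y)) ∧
    IsStdIF f := by
  have hV'V : ∀ v ∈ V', v ∈ V ∧ ∫ ω, ip (h k ω) (v ω) ∂μ ≠ 0 := by
    rw [hV']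
    exact fun v hv => hv
  have hf : f = affineInf V' (interferenceForm μ h k)
      fun v => eNormSq μ v / ‖∫ ω, ip (h k ω) (v ω) ∂μ‖ ^ 2 := by
    funext p
    simp only [hfdef, affineInf, interferenceForm_add_div_eq]
  have hℓ : ∀ v ∈ V', ∀ p, 0 ≤ p → 0 ≤ interferenceForm μ h k v p :=
    fun v hv _ hp => interferenceForm_nonneg h k (hint2 v (hV'V v hv).1 k) hp
  have hc : ∀ v ∈ V', (∫ ω, ∑ m, ‖h k ω m‖ ^ 2 ∂μ)⁻¹ ≤
      eNormSq μ v / ‖∫ ω, ip (h k ω) (v ω) ∂μ‖ ^ 2 :=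
    fun v hv => inv_integral_normSq_le (hh k) (hint3 v (hV'V v hv).1) (hV'V v hv).2
  have hc₀ : 0 < (∫ ω, ∑ m, ‖h k ω m‖ ^ 2 ∂μ)⁻¹ := by
    obtain ⟨v₀, hv₀⟩ := hne
    exact inv_pos.2 (integral_normSq_pos (hh k) (hint3 v₀ (hV'V v₀ hv₀).1) (hV'V v₀ hv₀).2)
  have hstd := isStdIF_affineInf hne hℓ hc hc₀
  subst hf
  exact ⟨hstd.1, fun x y hx hy t ht₀ ht₁ => (concaveOn_affineInf hne hℓ hc).2 hx hy ht₀
    (sub_nonneg.2 ht₁) (add_sub_cancel t 1), hstd⟩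

theorem stmt17 {Ω : Type*} [MeasurableSpace Ω] (μ : Measure Ω) [IsProbabilityMeasure μ]
    {M K : ℕ} (h : Fin K → Ω → Fin M → ℂ) (k : Fin K)
    (hh : ∀ j, Integrable (fun ω => ∑ m, ‖h j ω m‖ ^ 2) μ)
    (V : Set (Ω → Fin M → ℂ))
    (hint1 : ∀ v ∈ V, ∀ j, Integrable (fun ω => ip (h j ω) (v ω)) μ)
    (hint2 : ∀ v ∈ V, ∀ j, Integrable (fun ω => ‖ip (h j ω) (v ω)‖ ^ 2) μ)
    (hint3 : ∀ v ∈ V, Integrable (fun ω => ∑ m, ‖v ω m‖ ^ 2) μ)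
    (V' : Set (Ω → Fin M → ℂ))
    (hV' : V' = {v ∈ V | (∫ ω, ip (h k ω) (v ω) ∂μ) ≠ 0})
    (hne : V'.Nonempty)
    (f : (Fin K → ℝ) → ℝ)
    (hfdef : ∀ p : Fin K → ℝ, f p = sInf ((fun v =>
      (p k * ((∫ ω, ‖ip (h k ω) (v ω)‖ ^ 2 ∂μ) - ‖∫ ω, ip (h k ω) (v ω) ∂μ‖ ^ 2)
        + ∑ j ∈ Finset.univ.erase k, p j * ∫ ω, ‖ip (h j ω) (v ω)‖ ^ 2 ∂μ
        + eNormSq μ v) / ‖∫ ω, ip (h k ω) (v ω) ∂μ‖ ^ 2) '' V')) :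
    (∀ p : Fin K → ℝ, (∀ i, 0 ≤ p i) → 0 < f p) ∧
    (∀ x y : Fin K → ℝ, (∀ i, 0 ≤ x i) → (∀ i, 0 ≤ y i) →
      ∀ t : ℝ, 0 ≤ t → t ≤ 1 →
        t * f x + (1 - t) * f y ≤ f (t • x + (1 - t) • y)) ∧
    IsStdIF f :=
  stmt17_general μ h k hh V hint2 hint3 V' hV' hne f hfdef
end

section
/- Let T : ℝ₊^K → ℝ₊₊^K be a standard interference mapping, ‖·‖ a monotone norm, P > 0, and p* ∈ ℝ₊₊^K the unique fixed point of T̃(p) = (P/‖T(p)‖) T(p). Define utilities u_k(p) = p_k / f_k(p) from the coordinates f_k of T scaled by weights, i.e., T(p) = (γ₁ f₁(p), …, γ_K f_K(p)). Then p* maximizes min_k γ_k^{-1} u_k(p) over {p : ‖p‖ ≤ P}, and every other maximizer q of this problem satisfies q ≥ p* coordinatewise; i.e., p* is the least element of the solution set. -/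
namespace IsStdIF

variable {K : ℕ}

lemma const_mul {f : (Fin K → ℝ) → ℝ} (hf : IsStdIF f) {a : ℝ} (ha : 0 < a) :
    IsStdIF fun p => a * f p := by
  obtain ⟨hpos, hmono, hscal⟩ := hf
  refine ⟨fun p hp => mul_pos ha (hpos p hp), fun p q hq hqp => ?_, fun p hp α hα => ?_⟩
  · exact mul_le_mul_of_nonneg_left (hmono p q hq hqp) ha.le
  · calc a * f (α • p) < a * (α * f p) := mul_lt_mul_of_pos_left (hscal p hp α hα) ha
      _ = α * (a * f p) := by ring

theorem le_of_le_apply_of_apply_le {g : Fin K → (Fin K → ℝ) → ℝ} (hg : ∀ k, IsStdIF (g k))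
    {p q : Fin K → ℝ} (hp : ∀ i, 0 ≤ p i) (hq : ∀ i, 0 < q i)
    (hpg : ∀ k, p k ≤ g k p) (hgq : ∀ k, g k q ≤ q k) : p ≤ q := by
  by_contra hpq
  obtain ⟨j, hj⟩ : ∃ j, q j < p j := by simpa [Pi.le_def] using hpq
  have : Nonempty (Fin K) := ⟨j⟩
  obtain ⟨k, hk⟩ := Finite.exists_max fun i => p i / q i
  set α := p k / q k
  have hα : 1 < α := ((one_lt_div (hq j)).mpr hj).trans_le (hk j)
  have hpα : ∀ i, p i ≤ (α • q) i := fun i => (div_le_iff₀ (hq i)).mp (hk i)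
  have : p k < p k :=
    calc p k ≤ g k p := hpg k
      _ ≤ g k (α • q) := (hg k).2.1 _ _ hp hpα
      _ < α * g k q := (hg k).2.2 q (fun i => (hq i).le) α hα
      _ ≤ α * q k := mul_le_mul_of_nonneg_left (hgq k) (by linarith)
      _ = p k := div_mul_cancel₀ _ (hq k).ne'
  exact lt_irrefl _ this

end IsStdIF

lemma exists_pos_lt_one_mul_le {ι : Type*} [Finite ι] [Nonempty ι] {a b : ι → ℝ}
    (ha : ∀ i, 0 < a i) (hab : ∀ i, a i < b i) : ∃ β, 0 < β ∧ β < 1 ∧ ∀ i, a i ≤ β * b i := by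
  have hb : ∀ i, 0 < b i := fun i => (ha i).trans (hab i)
  obtain ⟨j, hj⟩ := Finite.exists_max fun i => a i / b i
  exact ⟨a j / b j, div_pos (ha j) (hb j), (div_lt_one (hb j)).mpr (hab j),
    fun i => (div_le_iff₀ (hb i)).mp (hj i)⟩

section Utility

variable {K : ℕ} {T : (Fin K → ℝ) → Fin K → ℝ} {c : ℝ} {p q : Fin K → ℝ}

lemma iInf_div_eq_of_smul_eq [Nonempty (Fin K)] (hfix : c • T p = p)
    (hT : ∀ k, 0 < T p k) : ⨅ k, p k / T p k = c := by
  conv_lhs => enter [1, k, 1]; rw [← hfix, Pi.smul_apply, smul_eq_mul]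
  simp only [mul_div_cancel_right₀ _ (hT _).ne', ciInf_const]

lemma mul_le_of_le_iInf_div (hT : ∀ k, 0 < T q k) (h : c ≤ ⨅ k, q k / T q k) (k : Fin K) :
    c * T q k ≤ q k :=
  (le_div_iff₀ (hT k)).mp (h.trans (ciInf_le (Finite.bddBelow_range _) k))

lemma mul_lt_of_lt_iInf_div (hT : ∀ k, 0 < T q k) (h : c < ⨅ k, q k / T q k) (k : Fin K) :
    c * T q k < q k :=
  (lt_div_iff₀ (hT k)).mp (h.trans_le (ciInf_le (Finite.bddBelow_range _) k))

variable (hT : ∀ k, IsStdIF fun p => T p k) (hc : 0 < c) (hp : ∀ i, 0 ≤ p i)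
  (hfix : c • T p = p)
include hT hc hp hfix

lemma le_of_smul_apply_le (hq : ∀ i, 0 < q i) (hcq : ∀ k, c * T q k ≤ q k) : p ≤ q :=
  IsStdIF.le_of_le_apply_of_apply_le (fun k => (hT k).const_mul hc) hp hq
    (fun k => (congrFun hfix k).symm.le) hcq

lemma le_of_le_iInf_div (hq : ∀ i, 0 ≤ q i) (hcq : c ≤ ⨅ k, q k / T q k) : p ≤ q := by
  have hTq : ∀ k, 0 < T q k := fun k => (hT k).1 q hq
  have hcTq := mul_le_of_le_iInf_div hTq hcq
  exact le_of_smul_apply_le hT hc hp hfix (fun i => (mul_pos hc (hTq i)).trans_le (hcTq i)) hcTq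

lemma iInf_div_le_of_smul_eq [Nonempty (Fin K)] {ν : (Fin K → ℝ) → ℝ}
    (hν_smul : ∀ (β : ℝ) (x : Fin K → ℝ), 0 < β → ν (β • x) = β * ν x)
    (hν_mono : ∀ x y : Fin K → ℝ, (∀ i, 0 ≤ x i) → (∀ i, x i ≤ y i) → ν x ≤ ν y)
    (hνp : 0 < ν p) (hq : ∀ i, 0 ≤ q i) (hνq : ν q ≤ ν p) : ⨅ k, q k / T q k ≤ c := by
  by_contra! hcq
  have hTq : ∀ k, 0 < T q k := fun k => (hT k).1 q hq
  have hcTq := mul_lt_of_lt_iInf_div hTq hcq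
  obtain ⟨β, hβ0, hβ1, hβ⟩ := exists_pos_lt_one_mul_le (fun k => mul_pos hc (hTq k)) hcTq
  have hqpos : ∀ i, 0 < q i := fun i => (mul_pos hc (hTq i)).trans (hcTq i)
  have hβq : ∀ i, 0 < (β • q) i := fun i => mul_pos hβ0 (hqpos i)
  have hsuper : ∀ k, c * T (β • q) k ≤ (β • q) k := fun k =>
    calc c * T (β • q) k ≤ c * T q k := mul_le_mul_of_nonneg_left
          ((hT k).2.1 q _ (fun i => (hβq i).le)
            (fun i => mul_le_of_le_one_left (hq i) hβ1.le)) hc.le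
      _ ≤ β * q k := hβ k
  have hpβq := le_of_smul_apply_le hT hc hp hfix hβq hsuper
  have : ν p < ν p :=
    calc ν p ≤ ν (β • q) := hν_mono p _ hp hpβq
      _ = β * ν q := hν_smul β q hβ0
      _ ≤ β * ν p := mul_le_mul_of_nonneg_left hνq hβ0.le
      _ < ν p := mul_lt_of_lt_one_left hνp hβ1
  exact lt_irrefl _ this

end Utility

theorem stmt18_general {K : ℕ} (f : Fin K → (Fin K → ℝ) → ℝ)
    (hf : ∀ k, IsStdIF (f k))
    (γ : Fin K → ℝ) (hγ : ∀ k, 0 < γ k)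
    (T : (Fin K → ℝ) → (Fin K → ℝ)) (hT : ∀ p k, T p k = γ k * f k p)
    (ν : (Fin K → ℝ) → ℝ)
    (hν_smul : ∀ (c : ℝ) (x : Fin K → ℝ), ν (c • x) = |c| * ν x)
    (hν_mono : ∀ x y : Fin K → ℝ, (∀ i, 0 ≤ x i) → (∀ i, x i ≤ y i) → ν x ≤ ν y)
    (P : ℝ) (hP : 0 < P)
    (pstar : Fin K → ℝ) (hps : ∀ i, 0 < pstar i)
    (hfix : (P / ν (T pstar)) • T pstar = pstar) :
    IsMaxOn (fun p => ⨅ k : Fin K, (γ k)⁻¹ * (p k / f k p))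
      {p : Fin K → ℝ | (∀ i, 0 ≤ p i) ∧ ν p ≤ P} pstar ∧
    (∀ q : Fin K → ℝ, ((∀ i, 0 ≤ q i) ∧ ν q ≤ P) →
      IsMaxOn (fun p => ⨅ k : Fin K, (γ k)⁻¹ * (p k / f k p))
        {p : Fin K → ℝ | (∀ i, 0 ≤ p i) ∧ ν p ≤ P} q →
      pstar ≤ q) := by
  rcases isEmpty_or_nonempty (Fin K) with hK | hK
  · exact ⟨fun q _ => by simp [Real.iInf_of_isEmpty], fun q _ _ i => isEmptyElim i⟩
  have ⟨k₀⟩ := hK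
  have hTstd : ∀ k, IsStdIF fun p => T p k := fun k => by
    simpa only [hT] using (hf k).const_mul (hγ k)
  have hu : (fun p => ⨅ k, (γ k)⁻¹ * (p k / f k p)) = fun p => ⨅ k, p k / T p k := by
    funext p; congr 1; funext k; rw [hT]; ring
  have hTps : ∀ k, 0 < T pstar k := fun k => (hTstd k).1 pstar fun i => (hps i).le
  set c := P / ν (T pstar)
  have hc : 0 < c := by
    have h := hps k₀
    rw [← hfix] at h
    exact pos_of_mul_pos_left h (hTps k₀).le
  have hνps : ν pstar = P := by
    rw [← hfix, hν_smul, abs_of_pos hc, div_mul_cancel₀]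
    exact fun h => hc.ne' (by simp [c, h])
  have hups := iInf_div_eq_of_smul_eq hfix hTps
  have hps0 : ∀ i, 0 ≤ pstar i := fun i => (hps i).le
  rw [hu]
  refine ⟨fun q hq => ?_, fun q hq hmax => ?_⟩
  · simp only [Set.mem_ofPred_eq, hups]
    exact iInf_div_le_of_smul_eq hTstd hc hps0 hfix
      (fun β x hβ => by rw [hν_smul, abs_of_pos hβ]) hν_mono (hνps ▸ hP) hq.1 (hνps ▸ hq.2)
  · exact le_of_le_iInf_div hTstd hc hps0 hfix hq.1 (hups ▸ hmax ⟨hps0, hνps.le⟩)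

theorem stmt18 {K : ℕ} (f : Fin K → (Fin K → ℝ) → ℝ)
    (hf : ∀ k, IsStdIF (f k)) (hcont : ∀ k, Continuous (f k))
    (γ : Fin K → ℝ) (hγ : ∀ k, 0 < γ k)
    (T : (Fin K → ℝ) → (Fin K → ℝ)) (hT : ∀ p k, T p k = γ k * f k p)
    (ν : (Fin K → ℝ) → ℝ)
    (hν_pos : ∀ x : Fin K → ℝ, x ≠ 0 → 0 < ν x) (hν0 : ν 0 = 0)
    (hν_smul : ∀ (c : ℝ) (x : Fin K → ℝ), ν (c • x) = |c| * ν x)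
    (hν_add : ∀ x y : Fin K → ℝ, ν (x + y) ≤ ν x + ν y)
    (hν_mono : ∀ x y : Fin K → ℝ, (∀ i, 0 ≤ x i) → (∀ i, x i ≤ y i) → ν x ≤ ν y)
    (P : ℝ) (hP : 0 < P)
    (pstar : Fin K → ℝ) (hps : ∀ i, 0 < pstar i)
    (hfix : (P / ν (T pstar)) • T pstar = pstar) :
    IsMaxOn (fun p => ⨅ k : Fin K, (γ k)⁻¹ * (p k / f k p))
      {p : Fin K → ℝ | (∀ i, 0 ≤ p i) ∧ ν p ≤ P} pstar ∧
    (∀ q : Fin K → ℝ, ((∀ i, 0 ≤ q i) ∧ ν q ≤ P) →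
      IsMaxOn (fun p => ⨅ k : Fin K, (γ k)⁻¹ * (p k / f k p))
        {p : Fin K → ℝ | (∀ i, 0 ≤ p i) ∧ ν p ≤ P} q →
      pstar ≤ q) :=
  stmt18_general f hf γ hγ T hT ν hν_smul hν_mono P hP pstar hps hfix
end
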